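/- arXiv:2310.20626 — 9 statements merged into one kernel-verified Lean document; each statement's English description precedes it below -/
import Mathlib

section
/- There exists a sequence of abelian groups (G_n)_{n ∈ ℕ} and surjective group homomorphisms f_n : G_{n+1} → G_n such that every G_n is of profinite type, but the inverse limit {(g_n) ∈ Π_n G_n : f_n(g_{n+1}) = g_n for all n} is not of profinite type. In particular, the class of abelian groups of profinite type is not closed under inverse limits. -/
/-- An (additive) group is of profinite type if it admits a topology making it a profinite
group, i.e. a compact Hausdorff totally disconnected topological group. -/
def IsProfiniteTypeAdd (G : Type*) [AddGroup G] : Prop :=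
  ∃ t : TopologicalSpace G, @IsTopologicalAddGroup G t _ ∧ @CompactSpace G t ∧
    @T2Space G t ∧ @TotallyDisconnectedSpace G t

/-- The inverse limit of a tower `⋯ → G (n+1) → G n → ⋯ → G 0` of abelian groups, as a
subgroup of the product. -/
def limitSubgroup (G : ℕ → Type*) [∀ n, AddCommGroup (G n)]
    (f : ∀ n, G (n + 1) →+ G n) : AddSubgroup (∀ n, G n) where
  carrier := {x | ∀ n, f n (x (n + 1)) = x n}
  add_mem' := by
    intro a b ha hb n
    simp only [Pi.add_apply, map_add, ha n, hb n]
  zero_mem' := by intro n; simp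
  neg_mem' := by
    intro a ha n
    simp only [Pi.neg_apply, map_neg, ha n]

namespace Stmt4Aux

/-! ### The building blocks.

`Pc` is the product `∏ₖ ℤ/2^(k+1)`, `Vp = (ℤ/2)^ℕ`, `Dfin = ⊕_ℕ ℤ/2`, and every group in our
tower is `Gd = Pc × Vp × Dfin`.  The connecting homomorphism `F` shifts the cyclic chains down
(killing the torsion in the limit, as for `ℤ₂ = lim ℤ/2^n`), and feeds the parity of the first
cyclic coordinate into coordinate `0` of `Vp` while shifting `Vp`; `Dfin` is untouched.  The
`2`-torsion of the inverse limit turns out to be exactly `Dfin`: countably infinite. -/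

abbrev Pc : Type := ∀ k : ℕ, ZMod (2 ^ (k + 1))
abbrev Vp : Type := ℕ → ZMod 2
abbrev Dfin : Type := ℕ →₀ ZMod 2
abbrev Gd : Type := Pc × Vp × Dfin

def Ffun (g : Gd) : Gd :=
  (fun k => ZMod.castHom (pow_dvd_pow 2 (by omega : k + 1 ≤ k + 1 + 1)) (ZMod (2 ^ (k + 1)))
      (g.1 (k + 1)),
   fun i => match i with
     | 0 => ZMod.castHom (by norm_num : (2:ℕ) ∣ 2 ^ (0 + 1)) (ZMod 2) (g.1 0)
     | (j+1) => g.2.1 j,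
   g.2.2)

noncomputable def F : Gd →+ Gd :=
  AddMonoidHom.mk' Ffun (by
    intro a b
    refine Prod.ext ?_ (Prod.ext ?_ ?_)
    · funext k
      exact map_add _ _ _
    · funext i
      cases i with
      | zero => exact map_add _ _ _
      | succ j => rfl
    · rfl)

def liftP (a : Pc) (c : ZMod 2) : Pc := fun k =>
  match k with
  | 0 => ((c.val : ℕ) : ZMod (2 ^ (0 + 1)))
  | (k+1) => (((a k).val : ℕ) : ZMod (2 ^ (k + 1 + 1)))

lemma F_surj : Function.Surjective F := by
  rintro ⟨a, w, d⟩
  refine ⟨(liftP a (w 0), fun i => w (i + 1), d), ?_⟩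
  refine Prod.ext ?_ (Prod.ext ?_ ?_)
  · funext k
    show ZMod.castHom _ (ZMod (2 ^ (k + 1))) (((a k).val : ℕ) : ZMod (2 ^ (k + 1 + 1))) = a k
    rw [map_natCast, ZMod.natCast_zmod_val]
  · funext i
    cases i with
    | zero =>
      show ZMod.castHom _ (ZMod 2) (((w 0).val : ℕ) : ZMod (2 ^ (0 + 1))) = w 0
      rw [map_natCast, ZMod.natCast_zmod_val]
    | succ j => rfl
  · rfl

/-! ### Analysis of 2-torsion elements in the limit. -/

lemma key {m : ℕ} {a : ZMod (2 ^ (m + 1 + 1))} (h : a + a = 0)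
    (hd : (2:ℕ) ^ (m + 1) ∣ 2 ^ (m + 1 + 1)) :
    ZMod.castHom hd (ZMod (2 ^ (m + 1))) a = 0 := by
  have h1 : ((a.val : ℕ) : ZMod (2 ^ (m + 1 + 1))) = a := ZMod.natCast_zmod_val a
  have h2 : ((2 * a.val : ℕ) : ZMod (2 ^ (m + 1 + 1))) = 0 := by
    push_cast
    rw [h1, two_mul, h]
  have hdvd : (2:ℕ) ^ (m + 1 + 1) ∣ 2 * a.val := (ZMod.natCast_eq_zero_iff _ _).mp h2
  have hdvd2 : (2:ℕ) ^ (m + 1) ∣ a.val := by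
    have h3 : (2:ℕ) * 2 ^ (m + 1) ∣ 2 * a.val := by
      rw [show (2:ℕ) * 2 ^ (m+1) = 2 ^ (m+1+1) by ring]
      exact hdvd
    exact (mul_dvd_mul_iff_left (by norm_num : (2:ℕ) ≠ 0)).mp h3
  rw [← h1, map_natCast]
  exact (ZMod.natCast_eq_zero_iff _ _).mpr hdvd2

section analysis

variable {x : ∀ _ : ℕ, Gd}

lemma comp_P_zero (hx : ∀ n, F (x (n + 1)) = x n) (h2 : ∀ n, x n + x n = 0) :
    ∀ n k, (x n).1 k = 0 := by
  intro n k
  have hc : ZMod.castHom (pow_dvd_pow 2 (by omega : k + 1 ≤ k + 1 + 1)) (ZMod (2 ^ (k + 1)))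
      ((x (n+1)).1 (k + 1)) = (x n).1 k := congrArg (fun g => g.1 k) (hx n)
  have h4 : (x (n+1)).1 (k+1) + (x (n+1)).1 (k+1) = 0 := by
    have h5 := congrArg (fun g : Gd => g.1 (k+1)) (h2 (n+1))
    simpa using h5
  rw [← hc]
  exact key h4 _

lemma comp_V_zero (hx : ∀ n, F (x (n + 1)) = x n) (h2 : ∀ n, x n + x n = 0) :
    ∀ i n, (x n).2.1 i = 0 := by
  intro i
  induction i with
  | zero =>
    intro n
    have hc : ZMod.castHom (by norm_num : (2:ℕ) ∣ 2 ^ (0 + 1)) (ZMod 2) ((x (n+1)).1 0)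
        = (x n).2.1 0 := congrArg (fun g => g.2.1 0) (hx n)
    rw [← hc, comp_P_zero hx h2 (n+1) 0, map_zero]
  | succ j ih =>
    intro n
    have hc : (x (n+1)).2.1 j = (x n).2.1 (j+1) := congrArg (fun g => g.2.1 (j+1)) (hx n)
    rw [← hc]
    exact ih (n+1)

lemma comp_D_const (hx : ∀ n, F (x (n + 1)) = x n) : ∀ n, (x n).2.2 = (x 0).2.2 := by
  intro n
  induction n with
  | zero => rfl
  | succ m ih =>
    have hc : (x (m+1)).2.2 = (x m).2.2 := congrArg (fun g => g.2.2) (hx m)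
    rw [hc, ih]

end analysis

/-! ### Each `Gd` is of profinite type. -/

noncomputable section

def iota : Dfin →ₗ[ZMod 2] Vp where
  toFun d := ⇑d
  map_add' a b := by ext i; simp
  map_smul' c a := by ext i; simp

lemma iota_inj : Function.Injective iota := by
  intro a b h
  exact DFunLike.coe_injective h

def addAssoc3 (A B C : Type) [AddCommGroup A] [AddCommGroup B] [AddCommGroup C] :
    (A × B) × C ≃+ A × (B × C) :=
  { Equiv.prodAssoc A B C with map_add' := fun _ _ => rfl }

/-- Abstractly, `(ℤ/2)^ℕ × ⊕_ℕ ℤ/2 ≅ (ℤ/2)^ℕ` (they are `𝔽₂`-vector spaces and the dimensions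
agree); we build the isomorphism from a complement of the finitely supported functions. -/
def bigE : (Vp × Dfin) ≃+ Vp := by
  classical
  let D : Submodule (ZMod 2) Vp := LinearMap.range iota
  let C : Submodule (ZMod 2) Vp := (Submodule.exists_isCompl D).choose
  have hC : IsCompl D C := (Submodule.exists_isCompl D).choose_spec
  let e1 : (D × C) ≃ₗ[ZMod 2] Vp := Submodule.prodEquivOfIsCompl D C hC
  let e2 : Dfin ≃ₗ[ZMod 2] D := LinearEquiv.ofInjective iota iota_inj
  let eDD : (Dfin × Dfin) ≃+ Dfin :=
    ((Finsupp.sumFinsuppLEquivProdFinsupp (ZMod 2)).symm.trans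
      (Finsupp.domLCongr (Denumerable.eqv (ℕ ⊕ ℕ)))).toAddEquiv
  exact
    (AddEquiv.prodCongr e1.symm.toAddEquiv e2.toAddEquiv).trans <|
    (addAssoc3 D C D).trans <|
    (AddEquiv.prodCongr (AddEquiv.refl D) (AddEquiv.prodComm : C × D ≃+ D × C)).trans <|
    (addAssoc3 D D C).symm.trans <|
    (AddEquiv.prodCongr
      ((AddEquiv.prodCongr e2.symm.toAddEquiv e2.symm.toAddEquiv).trans
        (eDD.trans e2.toAddEquiv))
      (AddEquiv.refl C)).trans <|
    e1.toAddEquiv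

end

theorem transport_profinite {A B : Type} [AddGroup A] [AddGroup B]
    (e : A ≃+ B) (hB : IsProfiniteTypeAdd B) : IsProfiniteTypeAdd A := by
  obtain ⟨t, htg, hc, ht2, htd⟩ := hB
  letI : TopologicalSpace B := t
  letI tA : TopologicalSpace A := TopologicalSpace.induced e t
  have hind : Topology.IsInducing (e : A → B) := ⟨rfl⟩
  have hcont : Continuous (e : A → B) := hind.continuous
  have hemb : Topology.IsEmbedding (e : A → B) := ⟨hind, e.injective⟩
  let h : A ≃ₜ B := e.toEquiv.toHomeomorphOfIsInducing hind
  refine ⟨tA, ?_, ?_, ?_, ?_⟩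
  · refine { continuous_add := ?_, continuous_neg := ?_ }
    · rw [continuous_induced_rng]
      have hh : ((e : A → B) ∘ fun p : A × A => p.1 + p.2)
          = fun p : A × A => e p.1 + e p.2 := by
        funext p
        exact map_add e p.1 p.2
      rw [hh]
      exact ((hcont.comp continuous_fst).add (hcont.comp continuous_snd))
    · rw [continuous_induced_rng]
      have hh : ((e : A → B) ∘ fun p : A => -p) = fun p : A => -(e p) := by
        funext p
        exact map_neg e p
      rw [hh]
      exact hcont.neg
  · exact h.symm.compactSpace
  · exact hemb.t2Space
  · rw [← hemb.isTotallyDisconnected_range]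
    exact isTotallyDisconnected_of_totallyDisconnectedSpace _

lemma profinite_Q : IsProfiniteTypeAdd (Pc × Vp) := by
  letI tP : ∀ k : ℕ, TopologicalSpace (ZMod (2 ^ (k + 1))) := fun _ => ⊥
  haveI dP : ∀ k : ℕ, DiscreteTopology (ZMod (2 ^ (k + 1))) := fun _ => ⟨rfl⟩
  letI t2 : TopologicalSpace (ZMod 2) := ⊥
  haveI d2 : DiscreteTopology (ZMod 2) := ⟨rfl⟩
  haveI gP : ∀ k : ℕ, IsTopologicalAddGroup (ZMod (2 ^ (k + 1))) := fun k =>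
    { continuous_add := continuous_of_discreteTopology
      continuous_neg := continuous_of_discreteTopology }
  haveI g2 : IsTopologicalAddGroup (ZMod 2) :=
    { continuous_add := continuous_of_discreteTopology
      continuous_neg := continuous_of_discreteTopology }
  exact ⟨inferInstance, inferInstance, inferInstance, inferInstance, inferInstance⟩

lemma profinite_Gd : IsProfiniteTypeAdd Gd :=
  transport_profinite (AddEquiv.prodCongr (AddEquiv.refl Pc) bigE) profinite_Q

/-! ### No countably infinite compact Hausdorff group. -/

theorem no_ctble_cpt (K : Type) [AddCommGroup K] [TopologicalSpace K]
    [IsTopologicalAddGroup K] [CompactSpace K] [T2Space K] [Countable K] [Infinite K] : False := by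
  obtain ⟨u, hu⟩ := exists_surjective_nat K
  have hcl : ∀ i : ℕ, IsClosed ({u i} : Set K) := fun i => isClosed_singleton
  have hU : (⋃ i, ({u i} : Set K)) = Set.univ := by
    ext y
    simp only [Set.mem_iUnion, Set.mem_singleton_iff, Set.mem_univ, iff_true]
    obtain ⟨i, hi⟩ := hu y
    exact ⟨i, hi.symm⟩
  obtain ⟨i, z, hz⟩ := nonempty_interior_of_iUnion_of_closed hcl hU
  have hzi : z = u i := Set.mem_singleton_iff.mp (interior_subset hz)
  have hopen : IsOpen ({u i} : Set K) := by
    have h0 : interior ({u i} : Set K) = {u i} :=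
      Set.Subset.antisymm interior_subset (Set.singleton_subset_iff.mpr (hzi ▸ hz))
    rw [← h0]
    exact isOpen_interior
  have hall : ∀ y : K, IsOpen ({y} : Set K) := by
    intro y
    have h3 : (Homeomorph.addRight (y - u i)) '' {u i} = {y} := by
      rw [Set.image_singleton]
      norm_num
    have h2 := (Homeomorph.addRight (y - u i)).isOpenMap _ hopen
    rwa [h3] at h2
  haveI : DiscreteTopology K := discreteTopology_iff_isOpen_singleton.mpr hall
  haveI : Finite K := finite_of_compact_of_discrete
  exact not_finite K


noncomputable abbrev Lim : AddSubgroup (∀ _ : ℕ, Gd) := limitSubgroup (fun _ => Gd) (fun _ => F)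

set_option maxHeartbeats 1000000 in
set_option synthInstance.maxHeartbeats 400000 in
lemma limit_not_profinite : ¬ IsProfiniteTypeAdd ↥Lim := by
  classical
  rintro ⟨t, htg, hcpt, ht2, -⟩
  letI := t
  haveI := htg
  haveI := hcpt
  haveI := ht2
  -- the 2-torsion subgroup
  let S : AddSubgroup ↥Lim :=
    { carrier := {x | x + x = 0}
      zero_mem' := by simp
      add_mem' := by
        intro a b ha hb
        simp only [Set.mem_setOf_eq] at *
        calc (a + b) + (a + b) = (a + a) + (b + b) := by abel
        _ = 0 := by rw [ha, hb, add_zero]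
      neg_mem' := by
        intro a ha
        simp only [Set.mem_setOf_eq] at *
        calc (-a) + (-a) = -(a + a) := by abel
        _ = 0 := by rw [ha, neg_zero] }
  have hScl : IsClosed (S : Set ↥Lim) := by
    have h0 : (S : Set ↥Lim) = (fun x : ↥Lim => x + x) ⁻¹' {0} := rfl
    rw [h0]
    exact isClosed_singleton.preimage (continuous_id.add continuous_id)
  haveI : CompactSpace ↥S := isCompact_iff_compactSpace.mp hScl.isCompact
  -- compatibility and torsion data of elements of S
  have hcompat : ∀ s : ↥S, ∀ n,
      F (((s : ↥Lim) : ∀ _ : ℕ, Gd) (n + 1)) = ((s : ↥Lim) : ∀ _ : ℕ, Gd) n :=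
    fun s => (s : ↥Lim).2
  have htor : ∀ s : ↥S, ∀ n,
      ((s : ↥Lim) : ∀ _ : ℕ, Gd) n + ((s : ↥Lim) : ∀ _ : ℕ, Gd) n = 0 :=
    fun s n => congrArg (fun y : ↥Lim => (y : ∀ _ : ℕ, Gd) n) s.2
  -- countability of S
  have hj : Function.Injective (fun s : ↥S => (((s : ↥Lim) : ∀ _ : ℕ, Gd) 0).2.2) := by
    intro a b hab
    apply Subtype.ext
    apply Subtype.ext
    funext n
    refine Prod.ext ?_ (Prod.ext ?_ ?_)
    · funext k
      rw [comp_P_zero (hcompat a) (htor a) n k, comp_P_zero (hcompat b) (htor b) n k]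
    · funext i
      rw [comp_V_zero (hcompat a) (htor a) i n, comp_V_zero (hcompat b) (htor b) i n]
    · rw [comp_D_const (hcompat a) n, comp_D_const (hcompat b) n]
      exact hab
  haveI : Countable ↥S := hj.countable
  -- S is infinite
  let el : Dfin → ↥Lim := fun d =>
    ⟨fun _ => ((0 : Pc), (0 : Vp), d), by
      intro n
      refine Prod.ext ?_ (Prod.ext ?_ ?_)
      · funext k
        exact map_zero _
      · funext i
        cases i with
        | zero => exact map_zero _
        | succ j => rfl
      · rfl⟩
  have hel2 : ∀ d : Dfin, d + d = 0 → el d ∈ S := by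
    intro d hd
    show el d + el d = 0
    apply Subtype.ext
    funext n
    refine Prod.ext ?_ (Prod.ext ?_ ?_)
    · funext k
      show (0 : ZMod (2 ^ (k+1))) + 0 = 0
      rw [add_zero]
    · funext i
      show (0 : ZMod 2) + 0 = 0
      rw [add_zero]
    · exact hd
  let elS : ℕ → ↥S := fun n =>
    ⟨el (Finsupp.single n 1), hel2 _ (by
      rw [← Finsupp.single_add]
      have h1 : (1 : ZMod 2) + 1 = 0 := by decide
      rw [h1, Finsupp.single_zero])⟩
  have helS : Function.Injective elS := by
    intro n m hnm
    by_contra hne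
    have h0 : ((((elS n : ↥S) : ↥Lim) : ∀ _ : ℕ, Gd) 0).2.2
        = ((((elS m : ↥S) : ↥Lim) : ∀ _ : ℕ, Gd) 0).2.2 := by rw [hnm]
    have h1 : (Finsupp.single n (1 : ZMod 2)) = Finsupp.single m 1 := h0
    have h2 := congrArg (fun z => z n) h1
    simp only [Finsupp.single_eq_same] at h2
    rw [Finsupp.single_apply, if_neg (fun h => hne h.symm)] at h2
    exact absurd h2 (by decide)
  haveI : Infinite ↥S := Infinite.of_injective elS helS
  exact no_ctble_cpt ↥S

end Stmt4Aux

set_option maxHeartbeats 1000000 in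
open Stmt4Aux in
/-- There is a sequence of abelian groups of profinite type with surjective connecting
homomorphisms whose inverse limit is not of profinite type: the class of abelian groups of
profinite type is not closed under inverse limits. -/
theorem stmt4 : ∃ (G : ℕ → Type) (_ : ∀ n, AddCommGroup (G n))
    (f : ∀ n, G (n + 1) →+ G n),
    (∀ n, Function.Surjective (f n)) ∧ (∀ n, IsProfiniteTypeAdd (G n)) ∧
    ¬ IsProfiniteTypeAdd (limitSubgroup G f) := by
  classical
  exact ⟨fun _ => Gd, fun _ => inferInstance, fun _ => F,
    fun _ => F_surj, fun _ => profinite_Gd, limit_not_profinite⟩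
end

section
/- There exist a prime p, a group G, and a normal abelian subgroup H of G of index p, such that H is of profinite type but G is not of profinite type. In particular, an extension of a finite cyclic group of order p by an abelian group of profinite type need not be of profinite type. -/
/-- A group is of profinite type if it admits a topology making it a profinite group,
i.e. a compact Hausdorff totally disconnected topological group. -/
def IsProfiniteType (G : Type*) [Group G] : Prop :=
  ∃ t : TopologicalSpace G, @IsTopologicalGroup G t _ ∧ @CompactSpace G t ∧
    @T2Space G t ∧ @TotallyDisconnectedSpace G t

namespace Stmt6Aux

open SemidirectProduct

/-- Transport `IsProfiniteType` along a `MulEquiv`. -/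
lemma isProfiniteType_of_mulEquiv {G G' : Type*} [Group G] [Group G'] (e : G ≃* G')
    (h : IsProfiniteType G) : IsProfiniteType G' := by
  obtain ⟨t, tg, tc, t2, td⟩ := h
  letI := t
  haveI := tg; haveI := tc; haveI := t2; haveI := td
  letI t' : TopologicalSpace G' := TopologicalSpace.induced e.symm t
  have hind : @Topology.IsInducing G' G t' t e.symm := @Topology.IsInducing.mk G' G t' t e.symm rfl
  let homeo : G ≃ₜ G' :=
    (@Equiv.toHomeomorphOfIsInducing G' G t' t e.symm.toEquiv hind).symm
  have hcm : @ContinuousMul G' t' _ := by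
    refine @ContinuousMul.mk G' t' _ ?_
    refine continuous_induced_rng.2 ?_
    have h1 : (⇑e.symm ∘ fun p : G' × G' => p.1 * p.2) =
        fun p : G' × G' => (e.symm p.1) * (e.symm p.2) := by
      funext p; exact map_mul e.symm _ _
    rw [h1]
    exact ((continuous_induced_dom.comp continuous_fst).mul
      (continuous_induced_dom.comp continuous_snd))
  have hci : @ContinuousInv G' t' _ := by
    refine @ContinuousInv.mk G' t' _ ?_
    refine continuous_induced_rng.2 ?_
    have h1 : (⇑e.symm ∘ fun g : G' => g⁻¹) = fun g : G' => (e.symm g)⁻¹ := by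
      funext g; exact map_inv e.symm _
    rw [h1]
    exact continuous_induced_dom.inv
  refine ⟨t', @IsTopologicalGroup.mk G' t' _ hcm hci, homeo.compactSpace, homeo.t2Space, ?_⟩
  exact (homeo.symm.isEmbedding.isTotallyDisconnected_range).1
    (isTotallyDisconnected_of_totallyDisconnectedSpace _)

abbrev K2 : Type := ℕ → ZMod 2
abbrev A2 : Type := (ℕ → ZMod 2) × (ℕ →₀ ZMod 2)

lemma k2_add_self (k : K2) : k + k = 0 := by
  funext n; exact CharTwo.add_self_eq_zero _

/-- The additive involution `(k, s) ↦ (k + s, s)` of `A2`. -/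
noncomputable def psi : A2 ≃+ A2 where
  toFun a := (a.1 + (⇑a.2 : K2), a.2)
  invFun a := (a.1 + (⇑a.2 : K2), a.2)
  left_inv a := by
    refine Prod.ext ?_ rfl
    show a.1 + ⇑a.2 + ⇑a.2 = a.1
    rw [add_assoc, k2_add_self, add_zero]
  right_inv a := by
    refine Prod.ext ?_ rfl
    show a.1 + ⇑a.2 + ⇑a.2 = a.1
    rw [add_assoc, k2_add_self, add_zero]
  map_add' a b := by
    refine Prod.ext ?_ rfl
    show (a.1 + b.1) + ⇑(a.2 + b.2) = (a.1 + ⇑a.2) + (b.1 + ⇑b.2)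
    rw [Finsupp.coe_add]
    abel

lemma psi_psi (a : A2) : psi (psi a) = a := psi.left_inv a

noncomputable def Psi : MulAut (Multiplicative A2) := AddEquiv.toMultiplicative psi

lemma Psi_apply (m : Multiplicative A2) :
    Psi m = Multiplicative.ofAdd (psi m.toAdd) := rfl

lemma Psi_sq : Psi ^ 2 = 1 := by
  have hsq : Psi ^ 2 = Psi * Psi := sq Psi
  rw [hsq]
  refine MulEquiv.ext fun m => ?_
  rw [MulAut.mul_apply, Psi_apply, Psi_apply, MulAut.one_apply]
  simp [psi_psi]

/-- The action of `ZMod 2` on `Multiplicative A2` by `Psi`. -/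
noncomputable def phi : Multiplicative (ZMod 2) →* MulAut (Multiplicative A2) where
  toFun q := Psi ^ (q.toAdd.val)
  map_one' := by
    show Psi ^ ((0 : ZMod 2).val) = 1
    rw [ZMod.val_zero, pow_zero]
  map_mul' x y := by
    show Psi ^ ((x.toAdd + y.toAdd).val) = _
    rw [ZMod.val_add, ← pow_eq_pow_mod _ Psi_sq, pow_add]

abbrev G2 : Type := Multiplicative A2 ⋊[phi] Multiplicative (ZMod 2)

def tau : Multiplicative (ZMod 2) := Multiplicative.ofAdd 1

lemma phi_tau : phi tau = Psi := by
  show Psi ^ ((1 : ZMod 2).val) = Psi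
  rw [show (1 : ZMod 2).val = 1 from rfl, pow_one]

noncomputable def xx : G2 := inr tau

noncomputable def cc (s : ℕ →₀ ZMod 2) : G2 :=
  ⟨Multiplicative.ofAdd ((⇑s : K2), 0), tau⟩

lemma k2_comp (x y : K2) : x + (-x + -y) = y := by
  funext n
  show x n + (-(x n) + -(y n)) = y n
  rw [CharTwo.neg_eq, CharTwo.neg_eq, ← add_assoc, CharTwo.add_self_eq_zero, zero_add]

lemma conj_xx (g : G2) : g * xx * g⁻¹ = cc (g.left.toAdd.2) := by
  have hleft : (g * xx * g⁻¹).left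
      = g.left * (phi (g.right * tau)) ((phi g.right⁻¹) g.left⁻¹) := by
    simp [xx, mul_left, inv_left, inv_right, mul_right, left_inr, right_inr, map_one, mul_one]
  have hright : (g * xx * g⁻¹).right = tau := by
    simp only [mul_right, inv_right, xx, right_inr]
    rw [mul_comm g.right tau, mul_inv_cancel_right]
  have hkey : (phi (g.right * tau)) ((phi g.right⁻¹) g.left⁻¹) = Psi g.left⁻¹ := by
    rw [← MulAut.mul_apply, ← map_mul, mul_comm g.right tau, mul_inv_cancel_right, phi_tau]
  apply SemidirectProduct.ext
  · rw [hleft, hkey]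
    show g.left * Psi g.left⁻¹ = Multiplicative.ofAdd ((⇑g.left.toAdd.2 : K2), 0)
    have h2 : g.left * Psi g.left⁻¹
        = Multiplicative.ofAdd (g.left.toAdd + psi (-(g.left.toAdd))) := by
      rw [Psi_apply]; rfl
    rw [h2]
    congr 1
    set a := g.left.toAdd with ha
    refine Prod.ext ?_ ?_
    · show a.1 + ((-a).1 + ⇑(-a).2) = ⇑a.2
      have h1 : ((-a).1 : K2) = -a.1 := rfl
      have h3 : (⇑(-a).2 : K2) = -(⇑a.2 : K2) := by
        show (⇑(-a.2) : K2) = -(⇑a.2 : K2)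
        ext n'
        simp
      rw [h1, h3, k2_comp]
    · show a.2 + (-a).2 = 0
      exact add_neg_cancel a.2
  · rw [hright]; rfl

noncomputable def gs (s : ℕ →₀ ZMod 2) : G2 := inl (Multiplicative.ofAdd ((0 : K2), s))

lemma conj_gs (s : ℕ →₀ ZMod 2) : gs s * xx * (gs s)⁻¹ = cc s := by
  rw [conj_xx]
  congr 1

lemma cc_inj : Function.Injective cc := by
  intro s t hst
  have h1 : (cc s).left = (cc t).left := by rw [hst]
  have h2 : ((⇑s : K2), (0 : ℕ →₀ ZMod 2)) = ((⇑t : K2), 0) :=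
    Multiplicative.ofAdd.injective h1
  have h3 : (⇑s : K2) = ⇑t := congrArg Prod.fst h2
  exact DFunLike.coe_injective h3

set_option maxHeartbeats 2000000 in
theorem not_profinite : ¬ IsProfiniteType G2 := by
  rintro ⟨t, tg, tc, t2, td⟩
  letI := t
  haveI := tg; haveI := tc; haveI := t2
  -- the fibers of the conjugation map cover G2
  have hcover : (⋃ s : (ℕ →₀ ZMod 2), {g : G2 | g * xx * g⁻¹ = cc s}) = Set.univ := by
    ext g
    simp only [Set.mem_iUnion, Set.mem_setOf_eq, Set.mem_univ, iff_true]
    exact ⟨_, conj_xx g⟩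
  have hcont : Continuous fun g : G2 => g * xx * g⁻¹ :=
    (continuous_id.mul continuous_const).mul continuous_inv
  have hclosed : ∀ s : (ℕ →₀ ZMod 2), IsClosed {g : G2 | g * xx * g⁻¹ = cc s} := fun s =>
    isClosed_eq hcont continuous_const
  obtain ⟨s₀, hs₀⟩ := nonempty_interior_of_iUnion_of_closed hclosed hcover
  obtain ⟨g₁, hg₁⟩ := hs₀
  have hg₁mem' : g₁ ∈ {g : G2 | g * xx * g⁻¹ = cc s₀} := interior_subset hg₁
  have hg₁mem : g₁ * xx * g₁⁻¹ = cc s₀ := hg₁mem'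
  set Z := Subgroup.centralizer ({xx} : Set G2) with hZ
  have hcoset : (Z : Set G2) = (fun h => g₁⁻¹ * h) '' {g : G2 | g * xx * g⁻¹ = cc s₀} := by
    ext z
    constructor
    · intro hz
      refine ⟨g₁ * z, ?_, by show g₁⁻¹ * (g₁ * z) = z; group⟩
      have hcomm : xx * z = z * xx :=
        (Subgroup.mem_centralizer_iff.1 hz) xx (Set.mem_singleton _)
      show (g₁ * z) * xx * (g₁ * z)⁻¹ = cc s₀
      calc (g₁ * z) * xx * (g₁ * z)⁻¹ = g₁ * (z * xx * z⁻¹) * g₁⁻¹ := by group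
        _ = g₁ * (xx * z * z⁻¹) * g₁⁻¹ := by rw [hcomm]
        _ = g₁ * xx * g₁⁻¹ := by group
        _ = cc s₀ := hg₁mem
    · rintro ⟨g, hg, rfl⟩
      have hg' : g * xx * g⁻¹ = cc s₀ := hg
      show g₁⁻¹ * g ∈ Z
      rw [hZ, Subgroup.mem_centralizer_iff]
      intro h hh
      rw [Set.mem_singleton_iff] at hh
      subst hh
      have heq : g * xx * g⁻¹ = g₁ * xx * g₁⁻¹ := by rw [hg', hg₁mem]
      calc xx * (g₁⁻¹ * g)
          = g₁⁻¹ * (g₁ * xx * g₁⁻¹) * g := by group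
        _ = g₁⁻¹ * (g * xx * g⁻¹) * g := by rw [← heq]
        _ = (g₁⁻¹ * g) * xx := by group
  -- Z is open
  have hone : (1 : G2) ∈ interior (Z : Set G2) := by
    have himg : (Z : Set G2)
        = ⇑(Homeomorph.mulLeft (g₁⁻¹ : G2)) '' {g : G2 | g * xx * g⁻¹ = cc s₀} := by
      rw [hcoset]; rfl
    rw [himg, ← Homeomorph.image_interior]
    exact ⟨g₁, hg₁, by show g₁⁻¹ * g₁ = 1; group⟩
  have hZopen : IsOpen (Z : Set G2) :=
    Subgroup.isOpen_of_mem_nhds Z (mem_interior_iff_mem_nhds.1 hone)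
  haveI hfin : Finite (G2 ⧸ Z) := Subgroup.quotient_finite_of_isOpen Z hZopen
  -- but there are infinitely many cosets
  have hinj : Function.Injective (fun s : (ℕ →₀ ZMod 2) => ((gs s : G2) : G2 ⧸ Z)) := by
    intro s tt h
    have hz : (gs s)⁻¹ * gs tt ∈ Z := (QuotientGroup.eq).1 h
    have hcomm : xx * ((gs s)⁻¹ * gs tt) = ((gs s)⁻¹ * gs tt) * xx :=
      (Subgroup.mem_centralizer_iff.1 hz) xx (Set.mem_singleton _)
    have hcc : cc tt = cc s := by
      calc cc tt = gs tt * xx * (gs tt)⁻¹ := (conj_gs tt).symm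
        _ = gs s * (((gs s)⁻¹ * gs tt) * xx * ((gs s)⁻¹ * gs tt)⁻¹) * (gs s)⁻¹ := by group
        _ = gs s * ((xx * ((gs s)⁻¹ * gs tt)) * ((gs s)⁻¹ * gs tt)⁻¹) * (gs s)⁻¹ := by
            rw [hcomm]
        _ = gs s * xx * (gs s)⁻¹ := by group
        _ = cc s := conj_gs s
    exact (cc_inj hcc).symm
  obtain ⟨s, tt, hne, heq⟩ := Finite.exists_ne_map_eq_of_infinite
    (fun s : (ℕ →₀ ZMod 2) => ((gs s : G2) : G2 ⧸ Z))
  exact hne (hinj heq)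

/-- `Multiplicative (ℕ → ZMod 2)` is of profinite type. -/
lemma profinite_K2 : IsProfiniteType (Multiplicative K2) := by
  letI : TopologicalSpace (ZMod 2) := ⊥
  haveI : DiscreteTopology (ZMod 2) := ⟨rfl⟩
  haveI : IsTopologicalAddGroup (ZMod 2) :=
    { continuous_add := continuous_of_discreteTopology
      continuous_neg := continuous_of_discreteTopology }
  refine ⟨inferInstanceAs (TopologicalSpace K2), ?_, ?_, ?_, ?_⟩
  · exact inferInstanceAs (IsTopologicalGroup (Multiplicative K2))
  · exact inferInstanceAs (CompactSpace K2)
  · exact inferInstanceAs (T2Space K2)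
  · exact inferInstanceAs (TotallyDisconnectedSpace K2)

lemma rank_eq : Module.rank (ZMod 2) A2 = Module.rank (ZMod 2) K2 := by
  have h1 : Module.rank (ZMod 2) A2
      = Module.rank (ZMod 2) K2 + Module.rank (ZMod 2) (ℕ →₀ ZMod 2) := rank_prod'
  have h2 : Module.rank (ZMod 2) (ℕ →₀ ZMod 2) = Cardinal.aleph0 := by
    rw [rank_finsupp_self', Cardinal.mk_nat]
  have h3 : Cardinal.aleph0 ≤ Module.rank (ZMod 2) K2 :=
    le_trans (le_max_left _ _) (max_aleph0_card_le_rank_fun_nat (ZMod 2))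
  rw [h1, h2, Cardinal.add_eq_left h3 h3]

/-- `Multiplicative A2` is of profinite type. -/
lemma profinite_A2 : IsProfiniteType (Multiplicative A2) := by
  obtain ⟨e⟩ := nonempty_linearEquiv_of_rank_eq rank_eq
  exact isProfiniteType_of_mulEquiv
    (AddEquiv.toMultiplicative e.toAddEquiv.symm) profinite_K2

end Stmt6Aux

open Stmt6Aux SemidirectProduct in
/-- There are a prime `p`, a group `G`, and a normal abelian subgroup `H ⊴ G` of index `p`
such that `H` is of profinite type but `G` is not. -/
theorem stmt6 : ∃ (p : ℕ), p.Prime ∧ ∃ (G : Type) (_ : Group G) (H : Subgroup G),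
    H.Normal ∧ H.index = p ∧ (∀ x y : H, x * y = y * x) ∧
    IsProfiniteType H ∧ ¬ IsProfiniteType G := by
  refine ⟨2, Nat.prime_two, G2, inferInstance,
    (rightHom : G2 →* Multiplicative (ZMod 2)).ker, inferInstance, ?_, ?_, ?_, not_profinite⟩
  · -- index
    rw [Subgroup.index_ker]
    rw [MonoidHom.range_eq_top.2 rightHom_surjective]
    rw [Subgroup.card_top]
    rw [Nat.card_congr (Multiplicative.toAdd (α := ZMod 2)), Nat.card_zmod]
  · -- commutativity
    rintro ⟨x, hx⟩ ⟨y, hy⟩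
    have hx' : x.right = 1 := hx
    have hy' : y.right = 1 := hy
    apply Subtype.ext
    show x * y = y * x
    apply SemidirectProduct.ext
    · rw [mul_left, mul_left, hx', hy', map_one, MulAut.one_apply, MulAut.one_apply]
      exact mul_comm _ _
    · rw [mul_right, mul_right, hx', hy']
  · -- H profinite
    have e1 : Multiplicative A2 ≃* ((inl : Multiplicative A2 →* G2).range : Subgroup G2) :=
      MonoidHom.ofInjective inl_injective
    have e2 : ((inl : Multiplicative A2 →* G2).range : Subgroup G2) ≃*
        ((rightHom : G2 →* Multiplicative (ZMod 2)).ker : Subgroup G2) :=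
      MulEquiv.subgroupCongr range_inl_eq_ker_rightHom
    exact isProfiniteType_of_mulEquiv (e1.trans e2) profinite_A2
end

section
/- Let G be a group and U a normal subgroup of G of finite index equipped with a topology τ' making U a profinite group. Then there exists a topology τ on G making G a profinite group such that U is open in (G, τ) and τ induces τ' on U, if and only if for every g ∈ G and every subgroup H of U that is open in (U, τ'), the conjugate gHg^{-1} is also open in (U, τ'). -/
open Topology Filter


/-- A topology on a group is a profinite topology if it makes the group a compact
Hausdorff totally disconnected topological group. -/
def IsProfiniteTopology (G : Type*) [Group G] (t : TopologicalSpace G) : Prop :=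
  @IsTopologicalGroup G t _ ∧ @CompactSpace G t ∧ @T2Space G t ∧
    @TotallyDisconnectedSpace G t

/-- Conjugation by `g ∈ G` on a normal subgroup `U ⊴ G`, as a homomorphism `U →* U`. -/
def conjSubHom {G : Type*} [Group G] (U : Subgroup G) (hN : U.Normal) (g : G) : U →* U :=
  ((MulAut.conj g).toMonoidHom.comp U.subtype).codRestrict U fun u => by
    simpa using hN.conj_mem u u.2 g

lemma conjSubHom_coe {G : Type*} [Group G] (U : Subgroup G) (hN : U.Normal) (g : G) (u : U) :
    (conjSubHom U hN g u : G) = g * u * g⁻¹ := rfl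

lemma conjSubHom_inv_comp {G : Type*} [Group G] (U : Subgroup G) (hN : U.Normal) (g : G)
    (v : U) : conjSubHom U hN g⁻¹ (conjSubHom U hN g v) = v := by
  ext
  simp only [conjSubHom_coe]
  group

/-- In a profinite group, every neighborhood of `1` contains an open subgroup. -/
lemma aux_openSubgroup_basis {U : Type*} [Group U] [TopologicalSpace U] [IsTopologicalGroup U]
    [CompactSpace U] [T2Space U] [TotallyDisconnectedSpace U] {s : Set U} (hs : s ∈ 𝓝 (1 : U)) :
    ∃ H : Subgroup U, IsOpen (H : Set U) ∧ (H : Set U) ⊆ s := by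
  obtain ⟨o, hos, ho, h1⟩ := mem_nhds_iff.mp hs
  obtain ⟨W, hW, h1W, hWo⟩ := compact_exists_isClopen_in_isOpen ho h1
  obtain ⟨H, hH⟩ := IsTopologicalGroup.exist_openSubgroup_sub_clopen_nhds_of_one hW h1W
  exact ⟨H.1, H.isOpen, hH.trans (hWo.trans hos)⟩

/-- Let `U ⊴ G` be a finite-index normal subgroup with a profinite topology `τ'`. There
is a profinite topology on `G` in which `U` is open and which induces `τ'` on `U` iff for
every `g ∈ G` the conjugate of every `τ'`-open subgroup of `U` is `τ'`-open. -/
theorem stmt8 (G : Type*) [Group G] (U : Subgroup G) (hN : U.Normal) (hF : U.FiniteIndex)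
    (τ' : TopologicalSpace U) (hτ' : IsProfiniteTopology U τ') :
    (∃ τ : TopologicalSpace G, IsProfiniteTopology G τ ∧ @IsOpen G τ (U : Set G) ∧
        TopologicalSpace.induced ((↑) : U → G) τ = τ') ↔
      ∀ (g : G) (H : Subgroup U), @IsOpen U τ' (H : Set U) →
        @IsOpen U τ' ((H.map (conjSubHom U hN g) : Subgroup U) : Set U) := by
  constructor
  · rintro ⟨τ, ⟨hTG, hC, hT2, hTD⟩, hUo, hind⟩ g H hH
    subst hind
    letI := τ
    haveI := hTG
    have hc : Continuous (conjSubHom U hN g⁻¹) := by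
      apply Continuous.subtype_mk
      exact (continuous_const.mul continuous_subtype_val).mul continuous_const
    have him : ((H.map (conjSubHom U hN g) : Subgroup U) : Set U) =
        (conjSubHom U hN g⁻¹) ⁻¹' (H : Set U) := by
      ext u
      simp only [Subgroup.coe_map, Set.mem_image, Set.mem_preimage, SetLike.mem_coe]
      constructor
      · rintro ⟨v, hv, rfl⟩
        rwa [conjSubHom_inv_comp]
      · intro hu
        refine ⟨conjSubHom U hN g⁻¹ u, hu, ?_⟩
        have := conjSubHom_inv_comp U hN g⁻¹ u
        simpa using this
    rw [him]
    exact hH.preimage hc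
  · intro hconj
    obtain ⟨hTG', hC', hT2', hTD'⟩ := hτ'
    -- key facts about the profinite group (U, τ')
    have key : ∀ s : Set U, s ∈ @nhds U τ' 1 →
        ∃ H : Subgroup U, @IsOpen U τ' (H : Set U) ∧ (H : Set U) ⊆ s := by
      letI := τ'
      haveI := hTG'; haveI := hC'; haveI := hT2'; haveI := hTD'
      exact fun s hs => aux_openSubgroup_basis hs
    have key2 : ∀ u : U, u ≠ 1 → ∃ H : Subgroup U, @IsOpen U τ' (H : Set U) ∧ u ∉ H := by
      letI := τ'
      haveI := hTG'; haveI := hC'; haveI := hT2'; haveI := hTD'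
      intro u hu
      have h1 : ({u}ᶜ : Set U) ∈ 𝓝 (1 : U) :=
        isOpen_compl_singleton.mem_nhds (by simpa using hu.symm)
      obtain ⟨H, hHo, hHs⟩ := aux_openSubgroup_basis h1
      exact ⟨H, hHo, fun h => hHs h rfl⟩
    -- the group filter basis of `τ'`-open subgroups of `U`
    let B : GroupFilterBasis G :=
      { sets := {s : Set G |
          ∃ H : Subgroup U, @IsOpen U τ' (H : Set U) ∧
            s = ((H.map U.subtype : Subgroup G) : Set G)}
        nonempty := ⟨_, ⊤, by simpa using (@isOpen_univ U τ'), rfl⟩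
        inter_sets := by
          rintro s t ⟨H, hH, rfl⟩ ⟨K, hK, rfl⟩
          refine ⟨_, ⟨H ⊓ K, by simpa using (@IsOpen.inter U τ' _ _ hH hK), rfl⟩, ?_⟩
          simp only [Subgroup.coe_map, Subgroup.coe_inf]
          exact Set.subset_inter (Set.image_mono Set.inter_subset_left)
            (Set.image_mono Set.inter_subset_right)
        one' := by
          rintro s ⟨H, hH, rfl⟩
          exact (H.map U.subtype).one_mem
        mul' := by
          rintro s ⟨H, hH, rfl⟩
          refine ⟨_, ⟨H, hH, rfl⟩, ?_⟩
          rw [Set.mul_subset_iff]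
          exact fun a ha b hb => (H.map U.subtype).mul_mem ha hb
        inv' := by
          rintro s ⟨H, hH, rfl⟩
          exact ⟨_, ⟨H, hH, rfl⟩, fun a ha => (H.map U.subtype).inv_mem ha⟩
        conj' := by
          rintro x₀ s ⟨H, hH, rfl⟩
          refine ⟨_, ⟨H.map (conjSubHom U hN x₀⁻¹), hconj x₀⁻¹ H hH, rfl⟩, ?_⟩
          rintro v hv
          simp only [Subgroup.coe_map, Set.mem_image, SetLike.mem_coe] at hv
          obtain ⟨w, ⟨u, hu, rfl⟩, rfl⟩ := hv
          refine Set.mem_preimage.mpr ?_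
          simp only [Subgroup.coe_map, Set.mem_image, SetLike.mem_coe]
          refine ⟨u, hu, ?_⟩
          simp only [Subgroup.coe_subtype, conjSubHom_coe]
          group }
    letI τ := B.topology
    haveI hTG : IsTopologicalGroup G := B.isTopologicalGroup
    have hbasis := B.nhds_one_hasBasis
    -- U is open
    have hUcoe : (((⊤ : Subgroup U).map U.subtype : Subgroup G) : Set G) = (U : Set G) := by
      ext x
      simp only [Subgroup.mem_map, Subgroup.mem_top, true_and, Subgroup.coe_subtype,
        SetLike.mem_coe]
      exact ⟨fun ⟨w, hw⟩ => hw ▸ w.2, fun hx => ⟨⟨x, hx⟩, rfl⟩⟩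
    have hUB : (U : Set G) ∈ B := ⟨⊤, by simpa using (@isOpen_univ U τ'), hUcoe.symm⟩
    have hUmem : (U : Set G) ∈ 𝓝 (1 : G) := hbasis.mem_of_mem hUB
    have hUopen : IsOpen (U : Set G) := U.isOpen_of_mem_nhds hUmem
    -- the induced topology on U is τ'
    have hind : TopologicalSpace.induced ((↑) : U → G) τ = τ' := by
      refine IsTopologicalGroup.ext ?_ hTG' ?_
      · exact topologicalGroup_induced U.subtype
      · rw [nhds_induced]
        have h1 : ((1 : U) : G) = 1 := rfl
        rw [h1]
        ext s
        rw [Filter.mem_comap]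
        constructor
        · rintro ⟨t, ht, hts⟩
          rw [hbasis.mem_iff] at ht
          obtain ⟨V, ⟨H, hHo, rfl⟩, hVt⟩ := ht
          refine Filter.mem_of_superset (hHo.mem_nhds H.one_mem) ?_
          intro u hu
          exact hts (hVt ⟨u, hu, rfl⟩)
        · intro hs
          obtain ⟨H, hHo, hHs⟩ := key s hs
          refine ⟨((H.map U.subtype : Subgroup G) : Set G),
            hbasis.mem_of_mem ⟨H, hHo, rfl⟩, ?_⟩
          intro u hu
          simp only [Set.mem_preimage, SetLike.mem_coe, Subgroup.mem_map] at hu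
          obtain ⟨w, hw, hwe⟩ := hu
          have : w = u := Subtype.ext hwe
          exact hHs (this ▸ hw)
    -- compactness
    have hCU' : @CompactSpace U (TopologicalSpace.induced ((↑) : U → G) τ) := by
      rw [hind]; exact hC'
    have hCU : IsCompact (U : Set G) := isCompact_iff_compactSpace.mpr hCU'
    haveI := hF
    haveI : Finite (G ⧸ U) := U.finite_quotient_of_finiteIndex
    haveI hcs : CompactSpace G := by
      refine ⟨?_⟩
      have hcov : (Set.univ : Set G) =
          ⋃ q : G ⧸ U, (fun y => Quotient.out q * y) '' (U : Set G) := by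
        refine ((Set.eq_univ_iff_forall).mpr fun x => Set.mem_iUnion.mpr ?_).symm
        refine ⟨QuotientGroup.mk x, (QuotientGroup.mk x : G ⧸ U).out⁻¹ * x, ?_, by group⟩
        have : (QuotientGroup.mk ((QuotientGroup.mk x : G ⧸ U).out) : G ⧸ U)
            = QuotientGroup.mk x := Quotient.out_eq' _
        exact QuotientGroup.eq.mp this
      rw [hcov]
      exact isCompact_iUnion fun q => hCU.image (continuous_mul_left _)
    -- separation by clopen sets
    have sep : ∀ x y : G, x ≠ y → ∃ C : Set G, IsClopen C ∧ x ∈ C ∧ y ∉ C := by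
      intro x y hxy
      by_cases hmem : x⁻¹ * y ∈ U
      · have hne : (⟨x⁻¹ * y, hmem⟩ : U) ≠ 1 := by
          intro h
          exact hxy (inv_mul_eq_one.mp (congrArg Subtype.val h))
        obtain ⟨H, hHo, huH⟩ := key2 _ hne
        have hHopen : IsOpen ((H.map U.subtype : Subgroup G) : Set G) :=
          (H.map U.subtype).isOpen_of_mem_nhds (hbasis.mem_of_mem ⟨H, hHo, rfl⟩)
        have hHclopen : IsClopen ((H.map U.subtype : Subgroup G) : Set G) :=
          ⟨(H.map U.subtype).isClosed_of_isOpen hHopen, hHopen⟩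
        refine ⟨(fun z => x⁻¹ * z) ⁻¹' ((H.map U.subtype : Subgroup G) : Set G),
          hHclopen.preimage (continuous_const.mul continuous_id), ?_, ?_⟩
        · show x⁻¹ * x ∈ ((H.map U.subtype : Subgroup G) : Set G)
          rw [inv_mul_cancel]
          exact (H.map U.subtype).one_mem
        · intro hy
          simp only [Set.mem_preimage, SetLike.mem_coe, Subgroup.mem_map] at hy
          obtain ⟨w, hw, hwe⟩ := hy
          exact huH ((Subtype.ext hwe : w = ⟨x⁻¹ * y, hmem⟩) ▸ hw)
      · refine ⟨(fun z => x⁻¹ * z) ⁻¹' (U : Set G),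
          IsClopen.preimage ⟨U.isClosed_of_isOpen hUopen, hUopen⟩
            (continuous_const.mul continuous_id), ?_, ?_⟩
        · show x⁻¹ * x ∈ (U : Set G)
          rw [inv_mul_cancel]
          exact U.one_mem
        · exact hmem
    haveI ht2 : T2Space G := by
      refine ⟨fun {x y} hxy => ?_⟩
      obtain ⟨C, hC, hxC, hyC⟩ := sep x y hxy
      exact ⟨C, Cᶜ, hC.2, hC.1.isOpen_compl, hxC, hyC, disjoint_compl_right⟩
    haveI : TotallySeparatedSpace G := by
      refine ⟨fun x _ y _ hxy => ?_⟩
      obtain ⟨C, hC, hxC, hyC⟩ := sep x y hxy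
      exact ⟨C, Cᶜ, hC.2, hC.1.isOpen_compl, hxC, hyC, by simp, disjoint_compl_right⟩
    haveI htd : TotallyDisconnectedSpace G := inferInstance
    exact ⟨B.topology, ⟨hTG, hcs, ht2, htd⟩, hUopen, hind⟩
end

section
/- Let G be an abelian group possessing a subgroup U of finite index such that U is of profinite type. Then G is of profinite type. -/
/-- An abelian group with a finite-index subgroup of profinite type is itself of
profinite type. -/
theorem stmt9 (G : Type*) [AddCommGroup G] (U : AddSubgroup G) (hU : U.FiniteIndex)
    (h : IsProfiniteTypeAdd U) : IsProfiniteTypeAdd G := by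
  obtain ⟨t, htg, hc, ht2, htd⟩ := h
  letI : TopologicalSpace U := t
  haveI := htg; haveI := hc; haveI := ht2; haveI := htd
  haveI : Finite (G ⧸ U) := U.finite_quotient_of_finiteIndex
  letI : TopologicalSpace (G ⧸ U) := ⊥
  haveI : DiscreteTopology (G ⧸ U) := ⟨rfl⟩
  -- the section of the quotient map
  set s : G ⧸ U → G := Quotient.out with hs
  have hmk : ∀ q : G ⧸ U, ((s q : G) : G ⧸ U) = q := fun q => QuotientAddGroup.out_eq' q
  have hmem : ∀ g : G, g - s ((g : G ⧸ U)) ∈ U := by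
    intro g
    rw [← QuotientAddGroup.eq_zero_iff, QuotientAddGroup.mk_sub, hmk, sub_self]
  -- the bijection G ≃ U × (G ⧸ U)
  set e : G ≃ U × (G ⧸ U) :=
    { toFun := fun g => (⟨g - s ((g : G ⧸ U)), hmem g⟩, (g : G ⧸ U))
      invFun := fun p => (p.1 : G) + s p.2
      left_inv := fun g => by simp
      right_inv := fun p => by
        have h1 : (((p.1 : G) + s p.2 : G) : G ⧸ U) = p.2 := by
          rw [QuotientAddGroup.mk_add, hmk, (QuotientAddGroup.eq_zero_iff _).2 p.1.2, zero_add]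
        refine Prod.ext (Subtype.ext ?_) h1
        simp only [h1]
        abel } with he
  letI tG : TopologicalSpace G := TopologicalSpace.induced e inferInstance
  have heC : Continuous e := continuous_induced_dom
  have homeo : G ≃ₜ U × (G ⧸ U) := e.toHomeomorphOfIsInducing ⟨rfl⟩
  -- correction cocycles, valued in U
  have hmemc : ∀ q q' : G ⧸ U, s q + s q' - s (q + q') ∈ U := by
    intro q q'
    rw [← QuotientAddGroup.eq_zero_iff, QuotientAddGroup.mk_sub, QuotientAddGroup.mk_add,
      hmk, hmk, hmk, sub_self]
  have hmemd : ∀ q : G ⧸ U, -s q - s (-q) ∈ U := by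
    intro q
    rw [← QuotientAddGroup.eq_zero_iff, QuotientAddGroup.mk_sub, QuotientAddGroup.mk_neg,
      hmk, hmk, sub_self]
  set c : G ⧸ U → G ⧸ U → U := fun q q' => ⟨s q + s q' - s (q + q'), hmemc q q'⟩ with hcdef
  set d : (G ⧸ U) → U := fun q => ⟨-s q - s (-q), hmemd q⟩ with hddef
  have key_add : ∀ g g' : G, e (g + g') =
      ((e g).1 + (e g').1 + c (e g).2 (e g').2, (e g).2 + (e g').2) := by
    intro g g'
    simp only [he, hcdef, Equiv.coe_fn_mk]
    refine Prod.ext (Subtype.ext ?_) (QuotientAddGroup.mk_add U g g')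
    push_cast
    rw [QuotientAddGroup.mk_add]
    abel
  have key_neg : ∀ g : G, e (-g) = (-(e g).1 + d (e g).2, -(e g).2) := by
    intro g
    simp only [he, hddef, Equiv.coe_fn_mk]
    refine Prod.ext (Subtype.ext ?_) (QuotientAddGroup.mk_neg U g)
    push_cast
    rw [QuotientAddGroup.mk_neg]
    abel
  haveI hCA : @ContinuousAdd G tG _ := by
    constructor
    have heq : (e ∘ fun p : G × G => p.1 + p.2) =
        (fun p : (U × (G ⧸ U)) × (U × (G ⧸ U)) =>
          ((p.1.1 + p.2.1 + c p.1.2 p.2.2 : U), p.1.2 + p.2.2)) ∘ (Prod.map e e) := by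
      funext p
      exact key_add p.1 p.2
    refine continuous_induced_rng.2 ?_
    rw [heq]
    refine Continuous.comp ?_ (heC.prodMap heC)
    refine Continuous.prodMk ?_ ?_
    · refine Continuous.add (Continuous.add ?_ ?_) ?_
      · exact continuous_fst.comp continuous_fst
      · exact continuous_fst.comp continuous_snd
      · exact ((continuous_of_discreteTopology
          (f := fun x : (G ⧸ U) × (G ⧸ U) => c x.1 x.2)).comp
          ((continuous_snd.comp continuous_fst).prodMk
            (continuous_snd.comp continuous_snd)))
    · exact (continuous_of_discreteTopology
        (f := fun x : (G ⧸ U) × (G ⧸ U) => x.1 + x.2)).comp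
        ((continuous_snd.comp continuous_fst).prodMk
          (continuous_snd.comp continuous_snd))
  haveI hCN : @ContinuousNeg G tG _ := by
    constructor
    have heq : (e ∘ fun g : G => -g) =
        (fun p : U × (G ⧸ U) => ((-p.1 + d p.2 : U), -p.2)) ∘ e := by
      funext g
      exact key_neg g
    refine continuous_induced_rng.2 ?_
    rw [heq]
    refine Continuous.comp ?_ heC
    refine Continuous.prodMk ?_ ?_
    · exact (continuous_fst.neg).add
        ((continuous_of_discreteTopology (f := fun q : G ⧸ U => d q)).comp continuous_snd)
    · exact (continuous_of_discreteTopology (f := fun q : G ⧸ U => -q)).comp continuous_snd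
  haveI htgG : @IsTopologicalAddGroup G tG _ := { hCA, hCN with }
  haveI : CompactSpace G := homeo.symm.compactSpace
  haveI : T2Space G := homeo.symm.t2Space
  haveI : TotallyDisconnectedSpace G :=
    ⟨homeo.isEmbedding.isTotallyDisconnected
      (isTotallyDisconnected_of_totallyDisconnectedSpace _)⟩
  exact ⟨tG, htgG, ‹_›, ‹_›, ‹_›⟩
end

section
/- Let S be a finite nonabelian simple group, I a set, and G = S^I the direct power (all functions I → S with pointwise multiplication). Then every finite group D that is a quotient of G by an abstract normal subgroup (i.e., D is finite and there exists a surjective group homomorphism G → D) is semisimple, that is, D is isomorphic to a direct product of finitely many nonabelian finite simple groups. -/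
/-!
Let `K` be a normal subgroup of `S^I`. If `f ∈ K` is constant equal to `a ≠ 1` on a set `A`, the
commutators of `f` with functions constant on `A` show that `K` contains every function that is
constant on `A` and trivial off `A`. As `S × S` is finite, splitting `I` according to the pair
`(f i, g i)` then gives `g ∈ K` whenever `g` is trivial wherever `f` is. Hence `f ∈ K` exactly
when `f = 1` eventually along every ultrafilter `U` finer than the filter of sets `A` such that
`K` contains every function trivial on `A`. As `S` is finite, each `f` has an eventual value
along `U`, and recording these values is a homomorphism `S^I → S^𝒰`, `𝒰` the set of such `U`,
with kernel `K`. Distinct ultrafilters give distinct eventual values, so `𝒰` is finite when `K`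
has finite index, and then sets separating the members of `𝒰` show the map is onto.
-/

/-- A finite group is semisimple if it is isomorphic to a direct product of finitely many
nonabelian finite simple groups. -/
def IsSemisimpleFinite (D : Type*) [Group D] : Prop :=
  ∃ (k : ℕ) (T : Fin k → Type) (_ : ∀ i, Group (T i)),
    (∀ i, Finite (T i)) ∧ (∀ i, IsSimpleGroup (T i)) ∧
    (∀ i, ∃ a b : T i, a * b ≠ b * a) ∧ Nonempty (D ≃* ∀ i, T i)

namespace Ultrafilter

variable {I S : Type*}

theorem exists_mem_notMem_of_ne {U V : Ultrafilter I} (h : U ≠ V) : ∃ A ∈ U, A ∉ V := by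
  by_contra! hUV
  exact h (eq_of_le hUV).symm

theorem exists_mem_forall_notMem {ι : Type*} [Finite ι] {U : Ultrafilter I}
    (V : ι → Ultrafilter I) (hV : ∀ j, V j ≠ U) : ∃ B ∈ U, ∀ j, B ∉ V j := by
  choose A hAU hAV using fun j => exists_mem_notMem_of_ne (hV j).symm
  exact ⟨⋂ j, A j, Filter.iInter_mem.2 hAU,
    fun j hB => hAV j (Filter.mem_of_superset hB (Set.iInter_subset A j))⟩

variable [Finite S]

noncomputable def eventualValue (U : Ultrafilter I) (f : I → S) : S :=
  (U.map f).eq_pure_of_finite.choose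

theorem eventually_eq_eventualValue (U : Ultrafilter I) (f : I → S) :
    ∀ᶠ i in U, f i = U.eventualValue f := by
  have h : U.map f = pure (U.eventualValue f) := (U.map f).eq_pure_of_finite.choose_spec
  exact mem_map.1 (h ▸ rfl : ({U.eventualValue f} : Set S) ∈ U.map f)

theorem eventualValue_eq_iff {U : Ultrafilter I} {f : I → S} {s : S} :
    U.eventualValue f = s ↔ ∀ᶠ i in U, f i = s := by
  refine ⟨fun h => h ▸ U.eventually_eq_eventualValue f, fun h => ?_⟩
  obtain ⟨i, hi, hi'⟩ := ((U.eventually_eq_eventualValue f).and h).exists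
  exact hi.symm.trans hi'

theorem eventualValue_mulIndicator_const [One S] (U : Ultrafilter I) (A : Set I) (b : S)
    [Decidable (A ∈ U)] :
    U.eventualValue (A.mulIndicator fun _ => b) = if A ∈ U then b else 1 := by
  rw [eventualValue_eq_iff]
  split_ifs with hA
  · filter_upwards [hA] with i hi using Set.mulIndicator_of_mem hi _
  · filter_upwards [U.compl_mem_iff_notMem.2 hA] with i hi using Set.mulIndicator_of_notMem hi _

theorem eventualValue_injective [One S] [Nontrivial S] :
    Function.Injective (eventualValue : Ultrafilter I → (I → S) → S) := by
  classical
  intro U V hUV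
  by_contra hne
  obtain ⟨A, hAU, hAV⟩ := exists_mem_notMem_of_ne hne
  obtain ⟨s, hs⟩ := exists_ne (1 : S)
  have := congrFun hUV (A.mulIndicator fun _ => s)
  simp only [eventualValue_mulIndicator_const, hAU, hAV, if_true, if_false] at this
  exact hs this

noncomputable def eventualValueHom [Monoid S] (U : Ultrafilter I) : (I → S) →* S where
  toFun := U.eventualValue
  map_one' := eventualValue_eq_iff.2 (.of_forall fun _ => rfl)
  map_mul' f g := eventualValue_eq_iff.2 <| by
    filter_upwards [U.eventually_eq_eventualValue f, U.eventually_eq_eventualValue g]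
      with i hf hg
    rw [Pi.mul_apply, hf, hg]

end Ultrafilter

theorem IsSimpleGroup.center_eq_bot {S : Type*} [Group S] [IsSimpleGroup S]
    (hna : ∃ a b : S, a * b ≠ b * a) : Subgroup.center S = ⊥ := by
  refine (inferInstance : (Subgroup.center S).Normal).eq_bot_or_eq_top.resolve_right fun htop => ?_
  obtain ⟨a, b, hab⟩ := hna
  exact hab (Subgroup.mem_center_iff.1 (htop ▸ Subgroup.mem_top b) a)

namespace Subgroup

variable {I S : Type*} [Group S] {K : Subgroup (I → S)}

theorem mulIndicator_const_mem [IsSimpleGroup S] (hZ : center S = ⊥) (hK : K.Normal)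
    {f : I → S} (hf : f ∈ K) {A : Set I} {a : S} (hA : ∀ i ∈ A, f i = a) (ha : a ≠ 1)
    (b : S) : A.mulIndicator (fun _ => b) ∈ K := by
  -- the `b` with `A.mulIndicator b ∈ K` form a normal subgroup, which contains `[c, a] ≠ 1`
  let ι : S →* I → S := (Set.mulIndicatorHom S A).comp (Pi.constMonoidHom I S)
  have hι (b : S) : ι b = A.mulIndicator fun _ => b := rfl
  obtain ⟨c, hc⟩ : ∃ c, c * a * c⁻¹ * a⁻¹ ≠ 1 := by
    by_contra! h
    refine ha (mem_bot.1 (hZ ▸ mem_center_iff.2 fun c => ?_))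
    simpa [mul_inv_eq_one, mul_inv_eq_iff_eq_mul] using h c
  have hcomm : c * a * c⁻¹ * a⁻¹ ∈ K.comap ι := by
    have : ι (c * a * c⁻¹ * a⁻¹) = ι c * f * (ι c)⁻¹ * f⁻¹ := by
      funext i
      by_cases hi : i ∈ A <;> simp [hι, hi, hA i]
    rw [mem_comap, this]
    exact K.mul_mem (hK.conj_mem f hf (ι c)) (K.inv_mem hf)
  have htop : K.comap ι = ⊤ := (hK.comap ι).eq_bot_or_eq_top.resolve_left fun h =>
    hc (mem_bot.1 (h ▸ hcomm))
  exact hι b ▸ mem_comap.1 (htop ▸ mem_top b : b ∈ K.comap ι)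

theorem mem_of_forall_eq_one_imp_eq_one [Finite S] [IsSimpleGroup S] (hZ : center S = ⊥)
    (hK : K.Normal) {f g : I → S} (hf : f ∈ K) (hfg : ∀ i, f i = 1 → g i = 1) :
    g ∈ K := by
  classical
  -- `g` is the function `(a, b) ↦ b` precomposed with `i ↦ (f i, g i)`
  let ρ : (S × S → S) →* (I → S) := MonoidHom.pi fun i => Pi.evalMonoidHom _ (f i, g i)
  suffices (fun p : S × S => p.2) ∈ K.comap ρ from this
  refine pi_mem_of_mulSingle_mem _ fun p => ?_
  have hρ : ρ (Pi.mulSingle p p.2) = {i | (f i, g i) = p}.mulIndicator fun _ => p.2 := by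
    funext i
    simp only [ρ, MonoidHom.pi_apply, Pi.evalMonoidHom_apply, Pi.mulSingle_apply,
      Set.mulIndicator_apply, Set.mem_ofPred_eq]
  rw [mem_comap, hρ]
  by_cases hp : p.1 = 1
  · convert K.one_mem
    funext i
    refine Set.mulIndicator_apply_eq_one.2 ?_
    rintro (rfl : (f i, g i) = p)
    exact hfg i hp
  · exact mulIndicator_const_mem hZ hK hf (fun i hi => congrArg Prod.fst hi) hp p.2

def vanishingFilter (K : Subgroup (I → S)) : Filter I where
  sets := {A | ∀ g : I → S, (∀ i ∈ A, g i = 1) → g ∈ K}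
  univ_sets g hg := by
    rw [show g = 1 from funext fun i => hg i trivial]
    exact K.one_mem
  sets_of_superset hA hAB g hg := hA g fun i hi => hg i (hAB hi)
  inter_sets {A B} hA hB g hg := by
    rw [← Set.mulIndicator_self_mul_compl A g]
    refine K.mul_mem (hB _ fun i hiB => ?_)
      (hA _ fun i hiA => Set.mulIndicator_of_notMem (Set.notMem_compl_iff.2 hiA) _)
    by_cases hiA : i ∈ A
    · rw [Set.mulIndicator_of_mem hiA, hg i ⟨hiA, hiB⟩]
    · exact Set.mulIndicator_of_notMem hiA _

theorem mem_iff_eventually_eq_one [Finite S] [IsSimpleGroup S] (hZ : center S = ⊥)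
    (hK : K.Normal) {f : I → S} : f ∈ K ↔ ∀ᶠ i in K.vanishingFilter, f i = 1 :=
  ⟨fun hf _ hg => mem_of_forall_eq_one_imp_eq_one hZ hK hf hg, fun hf => hf f fun _ h => h⟩

def vanishingUltrafilters (K : Subgroup (I → S)) : Set (Ultrafilter I) :=
  {U | ↑U ≤ K.vanishingFilter}

noncomputable def toPiEventualValue [Finite S] (K : Subgroup (I → S)) :
    (I → S) →* (K.vanishingUltrafilters → S) :=
  MonoidHom.pi fun U => U.1.eventualValueHom

theorem ker_toPiEventualValue [Finite S] [IsSimpleGroup S] (hZ : center S = ⊥)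
    (hK : K.Normal) : K.toPiEventualValue.ker = K := by
  ext f
  rw [MonoidHom.mem_ker, mem_iff_eventually_eq_one hZ hK, Filter.Eventually,
    Filter.mem_iff_ultrafilter, funext_iff]
  exact ⟨fun h U hU => Ultrafilter.eventualValue_eq_iff.1 (h ⟨U, hU⟩),
    fun h U => Ultrafilter.eventualValue_eq_iff.2 (h U.1 U.2)⟩

theorem finite_vanishingUltrafilters [Finite S] [IsSimpleGroup S] (hZ : center S = ⊥)
    (hK : K.Normal) [Finite ((I → S) ⧸ K)] : K.vanishingUltrafilters.Finite := by
  let lift := QuotientGroup.lift K K.toPiEventualValue (ker_toPiEventualValue hZ hK).ge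
  refine Set.finite_coe_iff.1 <| .of_injective (fun U q => lift q U) fun U V hUV =>
    Subtype.ext <| Ultrafilter.eventualValue_injective (S := S) <| funext fun f => ?_
  exact congrFun hUV (QuotientGroup.mk f)

theorem toPiEventualValue_surjective [Finite S] (hfin : K.vanishingUltrafilters.Finite) :
    Function.Surjective K.toPiEventualValue := by
  classical
  have := hfin.to_subtype
  intro t
  suffices t ∈ K.toPiEventualValue.range from this
  refine pi_mem_of_mulSingle_mem t fun U => ?_
  obtain ⟨B, hBU, hBV⟩ := U.1.exists_mem_forall_notMem
    (fun V : {V : K.vanishingUltrafilters // V ≠ U} => V.1.1) fun V h => V.2 (Subtype.ext h)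
  refine ⟨B.mulIndicator fun _ => t U, funext fun V => ?_⟩
  change V.1.eventualValue _ = _
  rw [Ultrafilter.eventualValue_mulIndicator_const]
  by_cases hV : V = U
  · subst hV
    simp [hBU]
  · simp [hV, hBV ⟨V, hV⟩]

theorem exists_quotient_mulEquiv_pi [Finite S] [IsSimpleGroup S] (hZ : center S = ⊥)
    (hK : K.Normal) [Finite ((I → S) ⧸ K)] :
    ∃ n : ℕ, Nonempty ((I → S) ⧸ K ≃* (Fin n → S)) := by
  have hfin := finite_vanishingUltrafilters hZ hK
  have := hfin.to_subtype
  refine ⟨Nat.card K.vanishingUltrafilters, ⟨?_⟩⟩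
  refine (QuotientGroup.quotientMulEquivOfEq (ker_toPiEventualValue hZ hK).symm).trans ?_
  exact (QuotientGroup.quotientKerEquivOfSurjective _ (toPiEventualValue_surjective hfin)).trans
    (MulEquiv.arrowCongr (Finite.equivFin _) (MulEquiv.refl S))

end Subgroup

theorem isSemisimpleFinite_of_mulEquiv_pi {D S : Type*} [Group D] [Group S] [Finite S]
    [IsSimpleGroup S] (hna : ∃ a b : S, a * b ≠ b * a) {n : ℕ} (e : D ≃* (Fin n → S)) :
    IsSemisimpleFinite D := by
  let e' : Shrink.{0} S ≃* S := Shrink.mulEquiv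
  refine ⟨n, fun _ => Shrink.{0} S, fun _ => inferInstance, fun _ => inferInstance,
    fun _ => e'.isSimpleGroup, fun _ => ?_, ⟨e.trans (MulEquiv.arrowCongr (.refl _) e'.symm)⟩⟩
  obtain ⟨a, b, hab⟩ := hna
  exact ⟨e'.symm a, e'.symm b, fun h => hab (e'.symm.injective (by simpa using h))⟩

/-- If `S` is a finite nonabelian simple group and `G = S^I`, then every finite quotient
of `G` (by an abstract normal subgroup) is semisimple. -/
theorem stmt10 (S : Type*) [Group S] [Finite S] (hS : IsSimpleGroup S)
    (hna : ∃ a b : S, a * b ≠ b * a) (I : Type*) (D : Type*) [Group D] [Finite D]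
    (φ : (I → S) →* D) (hφ : Function.Surjective φ) :
    IsSemisimpleFinite D := by
  have eD : D ≃* (I → S) ⧸ φ.ker := (QuotientGroup.quotientKerEquivOfSurjective φ hφ).symm
  have : Finite ((I → S) ⧸ φ.ker) := .of_equiv D eD.toEquiv
  obtain ⟨n, ⟨e⟩⟩ := φ.ker.exists_quotient_mulEquiv_pi (IsSimpleGroup.center_eq_bot hna)
    φ.normal_ker
  exact isSemisimpleFinite_of_mulEquiv_pi hna (eD.trans e)
end

section
/- Let S be a finite nonabelian simple group, I an infinite set, and G = S^I equipped with the product topology (each factor S discrete), so that G is a profinite group. Then every normal subgroup U of G of finite index which is of profinite type is open in G. Consequently, every finite-index normal subgroup of G is either open or not of profinite type. -/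
open scoped commutatorElement

private lemma commLeft {G : Type*} [Group G] {N : Subgroup G} (h : N.Normal)
    {n : G} (hn : n ∈ N) (y : G) : ⁅n, y⁆ ∈ N := by
  have e : ⁅n, y⁆ = n * (y * n⁻¹ * y⁻¹) := by rw [commutatorElement_def]; group
  rw [e]
  exact N.mul_mem hn (h.conj_mem _ (N.inv_mem hn) y)

private lemma centerBot {S : Type*} [Group S] (hS : IsSimpleGroup S)
    (hna : ∃ a b : S, a * b ≠ b * a) : Subgroup.center S = ⊥ := by
  rcases IsSimpleGroup.eq_bot_or_eq_top_of_normal (Subgroup.center S) inferInstance with h | h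
  · exact h
  · exfalso
    obtain ⟨a, b, hab⟩ := hna
    have ha : a ∈ Subgroup.center S := h ▸ Subgroup.mem_top a
    exact hab ((Subgroup.mem_center_iff.mp ha b).symm)

/-- In a profinite group, any nontrivial element is avoided by some open normal subgroup. -/
private lemma exists_ons {H : Type*} [Group H] [TopologicalSpace H] [IsTopologicalGroup H]
    [CompactSpace H] [T2Space H] [TotallyDisconnectedSpace H] {u : H} (hu : u ≠ 1) :
    ∃ M : OpenNormalSubgroup H, u ∉ M := by
  have h1 : connectedComponent (1 : H) = {1} :=
    totallyDisconnectedSpace_iff_connectedComponent_singleton.mp ‹_› 1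
  have hu' : u ∉ connectedComponent (1 : H) := by rw [h1]; simpa using hu
  rw [connectedComponent_eq_iInter_isClopen, Set.mem_iInter] at hu'
  push_neg at hu'
  obtain ⟨⟨s, hs, h1s⟩, hus⟩ := hu'
  obtain ⟨M, hM⟩ := IsTopologicalGroup.exist_openNormalSubgroup_sub_clopen_nhds_of_one hs h1s
  exact ⟨M, fun hmem => hus (hM hmem)⟩

/-- Key simplicity lemma: if a subgroup `W` of `S^I` is stable under conjugation by
one-point elements at `i`, contains commutators with them, and has an element nontrivial
at coordinate `i`, then it contains all one-point elements at `i`. -/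
private lemma single_mem_of {S : Type*} [Group S] (hS : IsSimpleGroup S)
    (hc : Subgroup.center S = ⊥) {I : Type*} [DecidableEq I]
    (W : Subgroup (I → S)) (i : I)
    (hconj : ∀ w ∈ W, ∀ c : S, Pi.mulSingle i c * w * (Pi.mulSingle i c)⁻¹ ∈ W)
    (hcomm : ∀ f ∈ W, ∀ c : S, ⁅f, Pi.mulSingle i c⁆ ∈ W)
    {g : I → S} (hg : g ∈ W) (hgi : g i ≠ 1) (a : S) : Pi.mulSingle i a ∈ W := by
  set T : Subgroup S := W.comap (MonoidHom.mulSingle (fun _ : I => S) i) with hT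
  have hTnormal : T.Normal := by
    constructor
    intro d hd c
    rw [hT, Subgroup.mem_comap] at hd ⊢
    have key : (MonoidHom.mulSingle (fun _ : I => S) i) (c * d * c⁻¹)
        = Pi.mulSingle i c * (MonoidHom.mulSingle (fun _ : I => S) i) d
          * (Pi.mulSingle i c)⁻¹ := by
      funext j
      by_cases hj : j = i
      · subst hj; simp [MonoidHom.mulSingle_apply, Pi.mulSingle_eq_same]
      · simp [MonoidHom.mulSingle_apply, Pi.mulSingle_eq_of_ne hj]
    rw [key]
    exact hconj _ hd c
  -- a noncommuting partner for `g i`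
  have hgi' : g i ∉ Subgroup.center S := by
    rw [hc, Subgroup.mem_bot]; exact hgi
  obtain ⟨c, hcne⟩ : ∃ c : S, g i * c ≠ c * g i := by
    by_contra hcon
    push_neg at hcon
    exact hgi' (Subgroup.mem_center_iff.mpr fun g' => (hcon g').symm)
  have hcne' : ⁅(g i), c⁆ ≠ 1 := fun h =>
    hcne (commutatorElement_eq_one_iff_mul_comm.mp h)
  have hid : ⁅g, Pi.mulSingle i c⁆ = (Pi.mulSingle i ⁅(g i), c⁆ : I → S) := by
    funext j
    by_cases hj : j = i
    · subst hj
      simp [commutatorElement_def, Pi.mulSingle_eq_same]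
    · simp [commutatorElement_def, Pi.mulSingle_eq_of_ne hj]
  have hmem : ⁅(g i), c⁆ ∈ T := by
    rw [hT, Subgroup.mem_comap, MonoidHom.mulSingle_apply, ← hid]
    exact hcomm g hg c
  rcases IsSimpleGroup.eq_bot_or_eq_top_of_normal T hTnormal with hbot | htop
  · rw [hbot, Subgroup.mem_bot] at hmem
    exact absurd hmem hcne'
  · have : a ∈ T := htop ▸ Subgroup.mem_top a
    rwa [hT, Subgroup.mem_comap, MonoidHom.mulSingle_apply] at this

private lemma closed_aux {S : Type*} [Group S] [Finite S] [TopologicalSpace S]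
    [DiscreteTopology S] (hS : IsSimpleGroup S) (hc : Subgroup.center S = ⊥)
    {I : Type*} (U : Subgroup (I → S)) (hN : U.Normal)
    {H : Type*} [Group H] [TopologicalSpace H] [IsTopologicalGroup H] [CompactSpace H]
    [T2Space H] [TotallyDisconnectedSpace H]
    (e : H →* (I → S)) (hinj : Function.Injective e)
    (hrange : Set.range e = (U : Set (I → S))) :
    IsClosed (U : Set (I → S)) := by
  classical
  rw [← hrange]
  have hcont : Continuous e := by
    refine continuous_pi fun i => ?_
    by_cases hi : ∃ g ∈ U, g i ≠ 1
    · obtain ⟨g, hgU, hgi⟩ := hi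
      -- step A: all one-point elements at i are in U
      have stepA : ∀ a : S, Pi.mulSingle i a ∈ U := fun a =>
        single_mem_of hS hc U i (fun w hw c => hN.conj_mem w hw _)
          (fun f hf c => commLeft hN hf _) hgU hgi a
      -- lifts of one-point elements through e
      have hlift : ∀ a : S, ∃ h : H, e h = Pi.mulSingle i a := by
        intro a
        have : Pi.mulSingle i a ∈ Set.range e := by rw [hrange]; exact stepA a
        exact this
      choose lft hlft using hlift
      have hlne : ∀ a : S, a ≠ 1 → lft a ≠ 1 := by
        intro a ha h1
        apply ha
        have h2 := hlft a
        rw [h1, map_one] at h2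
        have := congrFun h2 i
        simpa [Pi.mulSingle_eq_same] using this.symm
      -- open normal subgroups avoiding the lifts
      have hMex : ∀ a : {a : S // a ≠ 1}, ∃ M : OpenNormalSubgroup H, lft a.1 ∉ M :=
        fun a => exists_ons (hlne a.1 a.2)
      choose M hM using hMex
      set N : Subgroup H := ⨅ a : {a : S // a ≠ 1}, (M a).toSubgroup with hNdef
      have hNopen : IsOpen (N : Set H) := by
        have : (N : Set H) = ⋂ a : {a : S // a ≠ 1}, ((M a : Subgroup H) : Set H) := by
          rw [hNdef]; exact Subgroup.coe_iInf
        rw [this]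
        exact isOpen_iInter_of_finite fun a => (M a).isOpen
      have hNnormal : N.Normal := by
        constructor
        intro n hn g'
        rw [hNdef, Subgroup.mem_iInf] at hn ⊢
        exact fun a => (M a).isNormal'.conj_mem _ (hn a) g'
      -- N is contained in the kernel of coordinate i
      have hker : ∀ n ∈ N, e n i = 1 := by
        intro n hn
        by_contra hne
        have hconjW : ∀ w ∈ N.map e, ∀ c : S,
            Pi.mulSingle i c * w * (Pi.mulSingle i c)⁻¹ ∈ N.map e := by
          rintro w ⟨m, hm, rfl⟩ c
          refine ⟨lft c * m * (lft c)⁻¹, hNnormal.conj_mem _ hm _, ?_⟩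
          rw [map_mul, map_mul, map_inv, hlft]
        have hcommW : ∀ f ∈ N.map e, ∀ c : S, ⁅f, Pi.mulSingle i c⁆ ∈ N.map e := by
          rintro f ⟨m, hm, rfl⟩ c
          refine ⟨⁅m, lft c⁆, commLeft hNnormal hm _, ?_⟩
          rw [map_commutatorElement, hlft]
        have hmemW : Pi.mulSingle i (e n i) ∈ N.map e :=
          single_mem_of hS hc (N.map e) i hconjW hcommW ⟨n, hn, rfl⟩ hne (e n i)
        obtain ⟨m, hm, hem⟩ := hmemW
        have hmeq : m = lft (e n i) := hinj (by rw [hem, hlft])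
        have : lft (e n i) ∈ M ⟨e n i, hne⟩ := by
          have h3 := hmeq ▸ hm
          simp only [hNdef, SetLike.mem_coe, Subgroup.mem_iInf] at h3
          exact h3 ⟨e n i, hne⟩
        exact hM ⟨e n i, hne⟩ this
      -- kernel subgroup is open
      set K : Subgroup H := MonoidHom.ker ((Pi.evalMonoidHom (fun _ : I => S) i).comp e)
        with hKdef
      have hNK : N ≤ K := by
        intro n hn
        rw [hKdef, MonoidHom.mem_ker]
        exact hker n hn
      have hKopen : IsOpen (K : Set H) := Subgroup.isOpen_mono hNK hNopen
      -- conclude continuity of the i-th coordinate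
      rw [continuous_discrete_rng]
      intro b
      by_cases hb : ∃ h0 : H, e h0 i = b
      · obtain ⟨h0, hh0⟩ := hb
        have hpre : (fun h => e h i) ⁻¹' {b} = (fun h => h0⁻¹ * h) ⁻¹' (K : Set H) := by
          ext h
          simp only [Set.mem_preimage, Set.mem_singleton_iff, SetLike.mem_coe, hKdef,
            MonoidHom.mem_ker, MonoidHom.comp_apply, Pi.evalMonoidHom_apply, map_mul,
            map_inv, Pi.mul_apply, Pi.inv_apply, hh0]
          rw [inv_mul_eq_one]
          exact comm
        rw [hpre]
        exact hKopen.preimage (continuous_const.mul continuous_id)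
      · have : (fun h => e h i) ⁻¹' {b} = ∅ := by
          push_neg at hb
          ext h
          simpa using hb h
        rw [this]
        exact isOpen_empty
    · push_neg at hi
      have : (fun h => e h i) = fun _ => 1 := by
        funext h
        refine hi (e h) ?_
        have hx : e h ∈ Set.range ⇑e := Set.mem_range_self h
        rw [hrange] at hx
        exact hx
      rw [this]
      exact continuous_const
  exact (isCompact_range hcont).isClosed

/-- Let `S` be a finite nonabelian simple group with the discrete topology, `I` infinite,
and `G = S^I` with the product topology. Every finite-index normal subgroup of `G` which
is of profinite type is open; hence every finite-index normal subgroup is either open or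
not of profinite type. -/
theorem stmt11 (S : Type*) [Group S] [Finite S] [TopologicalSpace S] [DiscreteTopology S]
    (hS : IsSimpleGroup S) (hna : ∃ a b : S, a * b ≠ b * a) (I : Type*) [Infinite I]
    (U : Subgroup (I → S)) (hN : U.Normal) (hF : U.FiniteIndex)
    (hPT : IsProfiniteType U) :
    IsOpen (U : Set (I → S)) := by
  obtain ⟨τ, h1, h2, h3, h4⟩ := hPT
  have hc := centerBot hS hna
  have hclosed : IsClosed (U : Set (I → S)) :=
    @closed_aux S _ _ _ _ hS hc I U hN ↥U _ τ h1 h2 h3 h4 U.subtype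
      (Subgroup.subtype_injective U) (by
        ext x
        constructor
        · rintro ⟨y, rfl⟩; exact y.2
        · intro hx; exact ⟨⟨x, hx⟩, rfl⟩)
  exact Subgroup.isOpen_of_isClosed_of_finiteIndex U hclosed
end

section
/- Let A be an abelian group, let A_5 denote the alternating group on 5 letters acting on A^5 by permuting the coordinates, and let W = {(x_1, ..., x_5) ∈ A^5 : x_1 + x_2 + x_3 + x_4 + x_5 = 0}, which is invariant under this action. Then the semidirect product L = W ⋊ A_5 is a perfect group, i.e., L equals its own commutator subgroup. -/
def sumZero (A : Type*) [AddCommGroup A] : AddSubgroup (Fin 5 → A) where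
  carrier := {x | ∑ i, x i = 0}
  add_mem' := by
    intro a b ha hb
    simp only [Set.mem_setOf_eq, Pi.add_apply, Finset.sum_add_distrib] at *
    simp [ha, hb]
  zero_mem' := by simp
  neg_mem' := by
    intro a ha
    simp only [Set.mem_setOf_eq] at *
    simp [Finset.sum_neg_distrib, ha]

def permW (A : Type*) [AddCommGroup A] (σ : Equiv.Perm (Fin 5)) :
    sumZero A ≃+ sumZero A where
  toFun w := ⟨fun i => (w : Fin 5 → A) (σ⁻¹ i), by
    show ∑ i, (w : Fin 5 → A) (σ⁻¹ i) = 0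
    rw [Equiv.sum_comp (σ⁻¹ : Equiv.Perm (Fin 5)) (w : Fin 5 → A)]
    exact w.2⟩
  invFun w := ⟨fun i => (w : Fin 5 → A) (σ i), by
    show ∑ i, (w : Fin 5 → A) (σ i) = 0
    rw [Equiv.sum_comp (σ : Equiv.Perm (Fin 5)) (w : Fin 5 → A)]
    exact w.2⟩
  left_inv w := Subtype.ext <| funext fun i => by simp
  right_inv w := Subtype.ext <| funext fun i => by simp
  map_add' w₁ w₂ := Subtype.ext <| funext fun i => by simp

def gen (A : Type*) [AddCommGroup A] (a : A) (i j : Fin 5) : sumZero A :=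
  ⟨(Pi.single i a - Pi.single j a : Fin 5 → A), by
    show ∑ k, (Pi.single i a - Pi.single j a : Fin 5 → A) k = 0
    simp [Finset.sum_sub_distrib]⟩

lemma gen_sub_gen (A : Type*) [AddCommGroup A] (a : A) (i j k : Fin 5) :
    gen A a i k - gen A a j k = gen A a i j := by
  apply Subtype.ext
  show ((Pi.single i a - Pi.single k a : Fin 5 → A)) - (Pi.single j a - Pi.single k a : Fin 5 → A)
      = (Pi.single i a - Pi.single j a : Fin 5 → A)
  abel

lemma neg_gen (A : Type*) [AddCommGroup A] (a : A) (i j : Fin 5) :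
    -gen A a i j = gen A a j i := by
  apply Subtype.ext
  show -(Pi.single i a - Pi.single j a : Fin 5 → A) = (Pi.single j a - Pi.single i a : Fin 5 → A)
  abel

lemma permW_gen (A : Type*) [AddCommGroup A] (σ : Equiv.Perm (Fin 5)) (a : A) (i j : Fin 5) :
    permW A σ (gen A a i j) = gen A a (σ i) (σ j) := by
  apply Subtype.ext
  funext m
  show (Pi.single i a - Pi.single j a : Fin 5 → A) (σ⁻¹ m)
      = (Pi.single (σ i) a - Pi.single (σ j) a : Fin 5 → A) m
  simp [Pi.single_apply, Equiv.Perm.inv_eq_iff_eq, Equiv.symm_apply_eq]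

lemma decomp (A : Type*) [AddCommGroup A] (v : sumZero A) :
    v = ∑ i : Fin 5, gen A (v.1 i) i 4 := by
  apply Subtype.ext
  rw [AddSubmonoidClass.coe_finset_sum]
  funext m
  simp only [gen, Finset.sum_apply, Pi.sub_apply, Finset.sum_sub_distrib, Pi.single_apply]
  have h2 : ∑ i, v.1 i = 0 := v.2
  by_cases h : m = 4 <;>
    simp [h, Finset.sum_ite_eq, h2]
def permWHom (A : Type*) [AddCommGroup A] :
    Equiv.Perm (Fin 5) →* Multiplicative (AddAut (sumZero A)) where
  toFun σ := Multiplicative.ofAdd (permW A σ)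
  map_one' := by
    apply AddEquiv.ext; intro w
    change (permW A 1) w = w
    ext i
    simp [permW]
  map_mul' σ τ := by
    apply AddEquiv.ext; intro w
    change (permW A (σ * τ)) w = permW A σ (permW A τ w)
    ext i
    simp [permW, mul_inv_rev]

def addAutToMulAut (W : Type*) [AddCommGroup W] :
    Multiplicative (AddAut W) →* MulAut (Multiplicative W) where
  toFun e := AddEquiv.toMultiplicative (Multiplicative.toAdd e)
  map_one' := rfl
  map_mul' _ _ := rfl

def phi (A : Type*) [AddCommGroup A] :
    alternatingGroup (Fin 5) →* MulAut (Multiplicative (sumZero A)) :=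
  (addAutToMulAut _).comp ((permWHom A).comp (alternatingGroup (Fin 5)).subtype)

open SemidirectProduct Multiplicative commutatorElement in
/-- For any abelian group `A`, the semidirect product `W ⋊ A₅`, where
`W = {x ∈ A⁵ : ∑ xᵢ = 0}` and `A₅` permutes the coordinates, is a perfect group. -/
theorem stmt13 (A : Type*) [AddCommGroup A] :
    commutator (Multiplicative (sumZero A) ⋊[phi A] alternatingGroup (Fin 5)) = ⊤ := by
  set G := Multiplicative (sumZero A) ⋊[phi A] alternatingGroup (Fin 5) with hG
  -- A₅ is perfect
  have hA5 : commutator (alternatingGroup (Fin 5)) = ⊤ := by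
    rcases IsSimpleGroup.eq_bot_or_eq_top_of_normal
        (commutator (alternatingGroup (Fin 5))) inferInstance with h | h
    · exfalso
      have ha : (c[0,1,2] : Equiv.Perm (Fin 5)) ∈ alternatingGroup (Fin 5) := by
        rw [Equiv.Perm.mem_alternatingGroup]; decide
      have hb : (c[2,3,4] : Equiv.Perm (Fin 5)) ∈ alternatingGroup (Fin 5) := by
        rw [Equiv.Perm.mem_alternatingGroup]; decide
      have hc : ⁅(⟨_, ha⟩ : alternatingGroup (Fin 5)), (⟨_, hb⟩ : alternatingGroup (Fin 5))⁆
          ∈ commutator (alternatingGroup (Fin 5)) :=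
        Subgroup.commutator_mem_commutator (Subgroup.mem_top _) (Subgroup.mem_top _)
      rw [h, Subgroup.mem_bot, commutatorElement_eq_one_iff_mul_comm] at hc
      have hc' : (c[0,1,2] * c[2,3,4] : Equiv.Perm (Fin 5)) = c[2,3,4] * c[0,1,2] :=
        congrArg Subtype.val hc
      exact absurd hc' (by decide)
    · exact h
  -- inr of anything is in the commutator
  have hinr : ∀ σ : alternatingGroup (Fin 5), (inr σ : G) ∈ commutator G := by
    intro σ
    have hle : (commutator (alternatingGroup (Fin 5))).map (inr : _ →* G) ≤ commutator G := by
      rw [commutator_def, commutator_def, Subgroup.map_commutator]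
      exact Subgroup.commutator_mono le_top le_top
    exact hle (Subgroup.mem_map_of_mem _ (hA5 ▸ Subgroup.mem_top σ))
  -- key: twisted differences are commutators
  have key : ∀ (v : sumZero A) (σ : alternatingGroup (Fin 5)),
      (inl (ofAdd (permW A σ.1 v - v)) : G) ∈ commutator G := by
    intro v σ
    have h1 : (inl (ofAdd (permW A σ.1 v - v)) : G)
        = ⁅(inr σ : G), inl (ofAdd v)⁆ := by
      rw [commutatorElement_def, ← map_inv inr, ← map_inv inl, ← inl_aut (φ := phi A),
        ← map_mul]
      congr 1
      show ofAdd (permW A σ.1 v - v) = phi A σ (ofAdd v) * (ofAdd v)⁻¹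
      rw [ofAdd_sub, div_eq_mul_inv]
      congr 1
    rw [h1]
    exact Subgroup.commutator_mem_commutator (Subgroup.mem_top _) (Subgroup.mem_top _)
  -- generators are in the commutator
  have hgen : ∀ (a : A) (i : Fin 5), (inl (ofAdd (gen A a i 4)) : G) ∈ commutator G := by
    intro a i
    have step : ∀ (σ : Equiv.Perm (Fin 5)) (hσ : σ ∈ alternatingGroup (Fin 5)) (j : Fin 5),
        σ i = 4 → σ j = j → i ≠ 4 →
        (inl (ofAdd (gen A a i 4)) : G) ∈ commutator G := by
      intro σ hσ j hi hj _
      have h := key (gen A a i j) ⟨σ, hσ⟩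
      rw [permW_gen, hi, hj, gen_sub_gen] at h
      have h' := (commutator G).inv_mem h
      rw [← map_inv, ← ofAdd_neg, neg_gen] at h'
      exact h'
    by_cases hi4 : i = 4
    · subst hi4
      have : gen A a 4 4 = 0 := by
        apply Subtype.ext
        show (Pi.single (4:Fin 5) a - Pi.single 4 a : Fin 5 → A) = 0
        abel
      rw [this, ofAdd_zero, map_one]
      exact (commutator G).one_mem
    · fin_cases i
      · exact step (c[0,4] * c[1,2]) (by rw [Equiv.Perm.mem_alternatingGroup]; decide) 3
          (by decide) (by decide) hi4
      · exact step (c[1,4] * c[0,2]) (by rw [Equiv.Perm.mem_alternatingGroup]; decide) 3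
          (by decide) (by decide) hi4
      · exact step (c[2,4] * c[0,1]) (by rw [Equiv.Perm.mem_alternatingGroup]; decide) 3
          (by decide) (by decide) hi4
      · exact step (c[3,4] * c[0,1]) (by rw [Equiv.Perm.mem_alternatingGroup]; decide) 2
          (by decide) (by decide) hi4
      · exact absurd rfl hi4
  -- all of W is in the commutator
  have hW : ∀ v : Multiplicative (sumZero A), (inl v : G) ∈ commutator G := by
    intro v
    have hv : v.toAdd = ∑ i : Fin 5, gen A ((v.toAdd).1 i) i 4 := decomp A v.toAdd
    have hv2 : v = ∏ i : Fin 5, ofAdd (gen A ((v.toAdd).1 i) i 4) := by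
      rw [← ofAdd_sum, ← hv, ofAdd_toAdd]
    have hmem : v ∈ (commutator G).comap (inl : _ →* G) := by
      rw [hv2]
      exact Subgroup.prod_mem _ fun i _ => Subgroup.mem_comap.mpr (hgen _ i)
    exact hmem
  rw [eq_top_iff]
  intro g _
  rw [← inl_left_mul_inr_right g]
  exact Subgroup.mul_mem _ (hW g.left) (hinr g.right)
end

section
/- Let G and H be profinite groups and φ : G → H an abstract group isomorphism (not assumed continuous). If P is a p-Sylow subgroup of G, then φ(P) is a p-Sylow subgroup of H. In particular, φ(P) is a closed subgroup of H. -/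
/-- A closed subgroup `P` of a topological group is pro-`p` if, with the subspace
topology, every open normal subgroup of `P` has index a power of `p`. -/
def IsProP (p : ℕ) {G : Type*} [Group G] [TopologicalSpace G] (P : Subgroup G) : Prop :=
  ∀ U : Subgroup P, U.Normal → IsOpen (U : Set P) → ∃ k : ℕ, U.index = p ^ k

/-- A `p`-Sylow subgroup of a profinite group: a closed pro-`p` subgroup which is maximal
among closed pro-`p` subgroups. -/
def IsProPSylow (p : ℕ) {G : Type*} [Group G] [TopologicalSpace G]
    (P : Subgroup G) : Prop :=
  IsClosed (P : Set G) ∧ IsProP p P ∧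
    ∀ Q : Subgroup G, IsClosed (Q : Set G) → IsProP p Q → P ≤ Q → P = Q

/-- In a profinite group all of whose open normal subgroups have `p`-power index,
every element has a `q`-th root for every prime `q ≠ p`. -/
lemma aux_root {T : Type*} [Group T] [TopologicalSpace T] [IsTopologicalGroup T]
    [CompactSpace T] [T2Space T] [TotallyDisconnectedSpace T]
    {p : ℕ} (hp : p.Prime)
    (h : ∀ U : Subgroup T, U.Normal → IsOpen (U : Set T) → ∃ k : ℕ, U.index = p ^ k)
    {q : ℕ} (hq : q.Prime) (hqp : q ≠ p) (x : T) : ∃ y : T, y ^ q = x := by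
  classical
  set C : OpenNormalSubgroup T → Set T :=
    fun N => (fun y => (y ^ q)⁻¹ * x) ⁻¹' (N.toSubgroup : Set T) with hCdef
  have hcont : Continuous fun y : T => (y ^ q)⁻¹ * x :=
    ((continuous_pow q).inv).mul continuous_const
  have hclosed : ∀ N, IsClosed (C N) :=
    fun N => N.toOpenSubgroup.isClosed.preimage hcont
  have hne : ∀ N : OpenNormalSubgroup T, (C N).Nonempty := by
    intro N
    haveI : Finite (T ⧸ N.toSubgroup) :=
      Subgroup.quotient_finite_of_isOpen N.toSubgroup N.isOpen'
    obtain ⟨k, hk⟩ := h N.toSubgroup N.isNormal' N.isOpen'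
    have hco : (Nat.card (T ⧸ N.toSubgroup)).Coprime q := by
      rw [← Subgroup.index_eq_card, hk]
      exact Nat.Coprime.pow_left _ ((Nat.coprime_primes hp hq).mpr (Ne.symm hqp))
    obtain ⟨z, hz⟩ := (powCoprime hco).surjective (QuotientGroup.mk x)
    obtain ⟨w, rfl⟩ := QuotientGroup.mk_surjective z
    refine ⟨w, ?_⟩
    have hmk : ((w ^ q : T) : T ⧸ N.toSubgroup) = ((x : T) : T ⧸ N.toSubgroup) := by
      simpa using hz
    exact QuotientGroup.eq.mp hmk
  haveI : Nonempty (OpenNormalSubgroup T) :=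
    ⟨⟨⊤, ⟨fun n _ g => Subgroup.mem_top _⟩⟩⟩
  have hdir : Directed (· ⊇ ·) C := by
    intro N M
    refine ⟨N ⊓ M, ?_, ?_⟩ <;> intro y hy
    · exact (Subgroup.mem_inf.mp hy).1
    · exact (Subgroup.mem_inf.mp hy).2
  obtain ⟨y, hy⟩ :=
    IsCompact.nonempty_iInter_of_directed_nonempty_isCompact_isClosed C hdir hne
      (fun N => (hclosed N).isCompact) hclosed
  refine ⟨y, ?_⟩
  have hone : (y ^ q)⁻¹ * x = 1 := by
    by_contra hz
    obtain ⟨W, hWclopen, h1W, hzW⟩ := exists_isClopen_of_totally_separated (Ne.symm hz)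
    obtain ⟨N, hNW⟩ :=
      IsTopologicalGroup.exist_openNormalSubgroup_sub_clopen_nhds_of_one hWclopen h1W
    have hyC : y ∈ C N := Set.mem_iInter.mp hy N
    exact hzW (hNW hyC)
  rw [inv_mul_eq_one] at hone
  exact hone

/-- A closed pro-`p` subgroup of a profinite group is `q`-divisible for every prime `q ≠ p`. -/
lemma divisible_of_isProP {G : Type*} [Group G] [TopologicalSpace G] [IsTopologicalGroup G]
    [CompactSpace G] [T2Space G] [TotallyDisconnectedSpace G] {p : ℕ} (hp : p.Prime)
    {K : Subgroup G} (hK : IsClosed (K : Set G)) (h : IsProP p K) :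
    ∀ x ∈ K, ∀ q : ℕ, q.Prime → q ≠ p → ∃ y ∈ K, y ^ q = x := by
  intro x hx q hq hqp
  haveI : CompactSpace ↥K := isCompact_iff_compactSpace.mp hK.isCompact
  obtain ⟨y, hy⟩ := aux_root hp h hq hqp (⟨x, hx⟩ : ↥K)
  refine ⟨(y : G), y.2, ?_⟩
  have := congrArg Subtype.val hy
  simpa using this

/-- Divisibility transfers along an abstract group isomorphism. -/
lemma divisible_map {G H : Type*} [Group G] [Group H] (φ : G ≃* H) {K : Subgroup G} {p : ℕ}
    (hd : ∀ x ∈ K, ∀ q : ℕ, q.Prime → q ≠ p → ∃ y ∈ K, y ^ q = x) :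
    ∀ x ∈ K.map φ.toMonoidHom, ∀ q : ℕ, q.Prime → q ≠ p →
      ∃ y ∈ K.map φ.toMonoidHom, y ^ q = x := by
  rintro x hx q hq hqp
  obtain ⟨g, hg, rfl⟩ := hx
  obtain ⟨y, hy, rfl⟩ := hd g hg q hq hqp
  exact ⟨φ y, ⟨y, hy, rfl⟩, by simp [← map_pow]⟩

/-- The closure of a subgroup which is `q`-divisible away from `p` is pro-`p`. -/
lemma isProP_closure {H : Type*} [Group H] [TopologicalSpace H] [IsTopologicalGroup H]
    [CompactSpace H] {p : ℕ} (hp : p.Prime) (A : Subgroup H)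
    (hdiv : ∀ x ∈ A, ∀ q : ℕ, q.Prime → q ≠ p → ∃ y ∈ A, y ^ q = x) :
    IsProP p A.topologicalClosure := by
  intro U hUn hUo
  haveI := hUn
  have hQc : IsClosed ((A.topologicalClosure : Subgroup H) : Set H) :=
    A.isClosed_topologicalClosure
  haveI : CompactSpace ↥A.topologicalClosure := isCompact_iff_compactSpace.mp hQc.isCompact
  haveI hfin : Finite (↥A.topologicalClosure ⧸ U) := Subgroup.quotient_finite_of_isOpen U hUo
  -- every element of the finite quotient comes from `A`
  have key : ∀ f : ↥A.topologicalClosure ⧸ U, ∃ a : H, ∃ (ha : a ∈ A)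
      (haQ : a ∈ A.topologicalClosure),
      (QuotientGroup.mk (⟨a, haQ⟩ : ↥A.topologicalClosure) : ↥A.topologicalClosure ⧸ U) = f := by
    intro f
    obtain ⟨b, rfl⟩ := QuotientGroup.mk_surjective f
    have hSopen : IsOpen {y : ↥A.topologicalClosure | y⁻¹ * b ∈ U} := by
      have hc : Continuous fun y : ↥A.topologicalClosure => y⁻¹ * b :=
        continuous_inv.mul continuous_const
      exact hUo.preimage hc
    obtain ⟨W, hWopen, hWeq⟩ := isOpen_induced_iff.mp hSopen
    have hbS : b ∈ {y : ↥A.topologicalClosure | y⁻¹ * b ∈ U} := by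
      simp [Set.mem_setOf_eq, one_mem]
    have hbW : (b : H) ∈ W := by
      rw [← hWeq] at hbS; exact hbS
    have hbcl : (b : H) ∈ closure (A : Set H) := by
      rw [← Subgroup.topologicalClosure_coe]; exact b.2
    obtain ⟨a, haW, ha⟩ := mem_closure_iff.mp hbcl W hWopen hbW
    have haQ : a ∈ A.topologicalClosure := A.le_topologicalClosure ha
    refine ⟨a, ha, haQ, ?_⟩
    have haS : (⟨a, haQ⟩ : ↥A.topologicalClosure) ∈
        {y : ↥A.topologicalClosure | y⁻¹ * b ∈ U} := by
      rw [← hWeq]; exact haW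
    exact QuotientGroup.eq.mpr haS
  -- every element of the quotient is an r-th power for primes r ≠ p
  have hpow : ∀ (r : ℕ), r.Prime → r ≠ p → ∀ f : ↥A.topologicalClosure ⧸ U,
      ∃ g : ↥A.topologicalClosure ⧸ U, g ^ r = f := by
    intro r hr hrp f
    obtain ⟨a, ha, haQ, rfl⟩ := key f
    obtain ⟨y, hy, hyr⟩ := hdiv a ha r hr hrp
    have hyQ : y ∈ A.topologicalClosure := A.le_topologicalClosure hy
    refine ⟨QuotientGroup.mk (⟨y, hyQ⟩ : ↥A.topologicalClosure), ?_⟩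
    have hsub : (⟨y, hyQ⟩ : ↥A.topologicalClosure) ^ r = (⟨a, haQ⟩ : ↥A.topologicalClosure) := by
      ext; simpa using hyr
    rw [← QuotientGroup.mk_pow, hsub]
  -- hence the quotient has p-power order
  have hn0 : Nat.card (↥A.topologicalClosure ⧸ U) ≠ 0 := Nat.card_ne_zero.mpr ⟨⟨1⟩, hfin⟩
  have hfac : ∀ {d : ℕ}, d.Prime → d ∣ Nat.card (↥A.topologicalClosure ⧸ U) → d = p := by
    intro d hd hdvd
    by_contra hdp
    haveI : Fact d.Prime := ⟨hd⟩
    obtain ⟨g, hg⟩ := exists_prime_orderOf_dvd_card' (G := ↥A.topologicalClosure ⧸ U) d hdvd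
    have hsurj : Function.Surjective (fun g : ↥A.topologicalClosure ⧸ U => g ^ d) :=
      fun f => hpow d hd hdp f
    have hinj : Function.Injective (fun g : ↥A.topologicalClosure ⧸ U => g ^ d) :=
      Finite.injective_iff_surjective.mpr hsurj
    have hg1 : g = 1 := by
      apply hinj
      show g ^ d = 1 ^ d
      rw [one_pow, ← hg]
      exact pow_orderOf_eq_one g
    rw [hg1, orderOf_one] at hg
    exact absurd hg (Nat.ne_of_lt hd.one_lt)
  refine ⟨(Nat.card (↥A.topologicalClosure ⧸ U)).primeFactorsList.length, ?_⟩
  rw [Subgroup.index_eq_card]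
  exact Nat.eq_prime_pow_of_unique_prime_dvd hn0 hfac

/-- If `φ : G → H` is an abstract isomorphism of profinite groups and `P` is a `p`-Sylow
subgroup of `G`, then `φ(P)` is a `p`-Sylow subgroup of `H` (in particular closed). -/
theorem stmt14 (p : ℕ) (hp : p.Prime) (G H : Type*) [Group G] [Group H]
    [TopologicalSpace G] [IsTopologicalGroup G] [CompactSpace G] [T2Space G]
    [TotallyDisconnectedSpace G]
    [TopologicalSpace H] [IsTopologicalGroup H] [CompactSpace H] [T2Space H]
    [TotallyDisconnectedSpace H]
    (φ : G ≃* H) (P : Subgroup G) (hP : IsProPSylow p P) :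
    IsProPSylow p (P.map φ.toMonoidHom) := by
  obtain ⟨hPc, hPp, hPmax⟩ := hP
  set A := P.map φ.toMonoidHom with hAdef
  have hdivP := divisible_of_isProP hp hPc hPp
  have hdivA := divisible_map φ hdivP
  set Q := A.topologicalClosure with hQdef
  have hQc : IsClosed (Q : Set H) := A.isClosed_topologicalClosure
  have hQp : IsProP p Q := isProP_closure hp A hdivA
  have hAQ : A ≤ Q := A.le_topologicalClosure
  have key : ∀ Q' : Subgroup H, IsClosed (Q' : Set H) → IsProP p Q' → A ≤ Q' → Q' ≤ A := by
    intro Q' hc hpp hle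
    have hdivQ' := divisible_of_isProP hp hc hpp
    have hdivB := divisible_map φ.symm hdivQ'
    set B := Q'.map φ.symm.toMonoidHom with hBdef
    set R := B.topologicalClosure with hRdef
    have hPB : P ≤ B := by
      intro g hg
      exact ⟨φ g, hle ⟨g, hg, rfl⟩, φ.symm_apply_apply g⟩
    have hPR : P = R :=
      hPmax R B.isClosed_topologicalClosure (isProP_closure hp B hdivB)
        (hPB.trans B.le_topologicalClosure)
    intro x hx
    have hxB : φ.symm x ∈ P := by
      rw [hPR]
      exact B.le_topologicalClosure ⟨x, hx, rfl⟩
    exact ⟨φ.symm x, hxB, φ.apply_symm_apply x⟩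
  have hAeq : A = Q := le_antisymm hAQ (key Q hQc hQp hAQ)
  refine ⟨?_, ?_, fun Q' hc hpp hle => le_antisymm hle (key Q' hc hpp hle)⟩
  · rw [hAeq]; exact hQc
  · rw [hAeq]; exact hQp
end

section
/- There exists a profinite group (G, τ) such that G is profinitely rigid (τ is the unique topology on G making G a profinite group) and G admits a surjective group homomorphism onto the cyclic group of order 2 that is not continuous (equivalently, G has a subgroup of index 2 that is not open). -/
open Topology

/-- A linear functional on `ℕ → ZMod 2` taking value `1` on each `Pi.single n 1`. -/
lemma exists_functional : ∃ f : (ℕ → ZMod 2) →ₗ[ZMod 2] ZMod 2,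
    ∀ n : ℕ, f (Pi.single n 1) = 1 := by
  classical
  set L : (ℕ →₀ ZMod 2) →ₗ[ZMod 2] (ℕ → ZMod 2) := Finsupp.lcoeFun with hLdef
  have hL : Function.Injective L := fun a b h => DFunLike.coe_injective h
  set σ : (ℕ →₀ ZMod 2) →ₗ[ZMod 2] ZMod 2 :=
    Finsupp.linearCombination (ZMod 2) (fun _ : ℕ => (1 : ZMod 2)) with hσdef
  set e := LinearEquiv.ofInjective L hL with hedef
  obtain ⟨g, hg⟩ := LinearMap.exists_extend (σ.comp e.symm.toLinearMap)
  refine ⟨g, fun n => ?_⟩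
  have hmem : (Pi.single n 1 : ℕ → ZMod 2) ∈ LinearMap.range L :=
    ⟨Finsupp.single n 1, (Finsupp.single_eq_pi_single n 1)⟩
  have h1 : g ((Pi.single n 1 : ℕ → ZMod 2)) =
      (σ.comp e.symm.toLinearMap) ⟨Pi.single n 1, hmem⟩ := by
    rw [← hg]; rfl
  rw [h1]
  have h2 : e.symm ⟨(Pi.single n 1 : ℕ → ZMod 2), hmem⟩ = Finsupp.single n 1 := by
    rw [LinearEquiv.symm_apply_eq]
    apply Subtype.ext
    rw [hedef, LinearEquiv.ofInjective_apply]
    exact (Finsupp.single_eq_pi_single n 1).symm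
  simp only [LinearMap.coe_comp, Function.comp_apply, LinearEquiv.coe_coe, h2, hσdef,
    Finsupp.linearCombination_single, smul_eq_mul, mul_one]

/-- The product topology of discrete topologies on `ℕ → S` is profinite. -/
lemma pi_bot_profinite {S : Type} [Group S] [Finite S] :
    IsProfiniteTopology (ℕ → S) (@Pi.topologicalSpace ℕ (fun _ => S) (fun _ => ⊥)) := by
  letI : TopologicalSpace S := ⊥
  haveI : DiscreteTopology S := ⟨rfl⟩
  haveI : IsTopologicalGroup S := by constructor
  exact ⟨inferInstance, inferInstance, inferInstance, inferInstance⟩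

/-- A compact topology below a Hausdorff topology equals it. -/
lemma top_eq_of_le {X : Type} (t t' : TopologicalSpace X) (h : t ≤ t')
    (hc : @CompactSpace X t) (ht : @T2Space X t') : t = t' := by
  have h1 : Continuous[t, t'] (id : X → X) := continuous_id_iff_le.mpr h
  have h2 := @Continuous.continuous_symm_of_equiv_compact_to_t2 X X t t' hc ht
    (Equiv.refl X) h1
  exact le_antisymm h (continuous_id_iff_le.mp h2)

/-- Rigidity: if `S` is a finite centerless group, then the product topology is the
unique profinite topology on `ℕ → S`. -/
lemma rigid_aux {S : Type} [Group S] [Finite S]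
    (hS : ∀ a : S, (∀ g : S, a * g = g * a) → a = 1)
    (τ' : TopologicalSpace (ℕ → S))
    (tg : @IsTopologicalGroup (ℕ → S) τ' _)
    (hc : @CompactSpace (ℕ → S) τ')
    (ht : @T2Space (ℕ → S) τ') :
    τ' = @Pi.topologicalSpace ℕ (fun _ => S) (fun _ => ⊥) := by
  classical
  have hprof := @pi_bot_profinite S _ _
  obtain ⟨-, -, ht2_0, -⟩ := hprof
  letI : TopologicalSpace S := ⊥
  haveI : DiscreteTopology S := ⟨rfl⟩
  letI : TopologicalSpace (ℕ → S) := τ'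
  -- every coordinate-condition set is `τ'`-open
  have key : ∀ (i : ℕ) (s : S), IsOpen {x : ℕ → S | x i = s} := by
    intro i s
    set H : Subgroup (ℕ → S) := (Pi.evalMonoidHom (fun _ => S) i).ker with hH
    haveI : H.FiniteIndex := Subgroup.finiteIndex_ker _
    have hHset : (H : Set (ℕ → S)) =
        ⋂ g : S, {x : ℕ → S | x * Pi.mulSingle i g = Pi.mulSingle i g * x} := by
      ext x
      simp only [Set.mem_iInter, Set.mem_setOf_eq, SetLike.mem_coe, hH,
        MonoidHom.mem_ker, Pi.evalMonoidHom_apply]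
      constructor
      · intro hx g
        funext j
        by_cases hj : j = i
        · subst hj
          simp [Pi.mul_apply, Pi.mulSingle_eq_same, hx]
        · simp [Pi.mul_apply, Pi.mulSingle_eq_of_ne hj]
      · intro hx
        apply hS
        intro g
        have := congrFun (hx g) i
        simpa [Pi.mul_apply, Pi.mulSingle_eq_same] using this
    have hclosed : IsClosed (H : Set (ℕ → S)) := by
      rw [hHset]
      exact isClosed_iInter fun g =>
        isClosed_eq (continuous_id.mul continuous_const) (continuous_const.mul continuous_id)
    have hopen : IsOpen (H : Set (ℕ → S)) :=
      Subgroup.isOpen_of_isClosed_of_finiteIndex H hclosed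
    have hset : {x : ℕ → S | x i = s} =
        (fun x : ℕ → S => (Pi.mulSingle i s)⁻¹ * x) ⁻¹' (H : Set (ℕ → S)) := by
      ext x
      simp only [Set.mem_setOf_eq, Set.mem_preimage, SetLike.mem_coe, hH,
        MonoidHom.mem_ker, Pi.evalMonoidHom_apply, Pi.mul_apply, Pi.inv_apply,
        Pi.mulSingle_eq_same]
      constructor
      · intro h; rw [h, inv_mul_cancel]
      · intro h; exact (inv_mul_eq_one.mp h).symm
    rw [hset]
    exact hopen.preimage (continuous_const.mul continuous_id)
  have hcont : Continuous[τ', @Pi.topologicalSpace ℕ (fun _ => S) (fun _ => ⊥)]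
      (id : (ℕ → S) → (ℕ → S)) := by
    apply continuous_pi
    intro i
    show Continuous fun x : ℕ → S => x i
    rw [continuous_discrete_rng]
    intro s
    exact key i s
  have h1 : τ' ≤ @Pi.topologicalSpace ℕ (fun _ => S) (fun _ => ⊥) :=
    continuous_id_iff_le.mp hcont
  exact top_eq_of_le τ' _ h1 hc ht2_0

/-- There is a profinitely rigid profinite group `(G, τ)` (its profinite topology is
unique) admitting a surjective but noncontinuous homomorphism onto the cyclic group of
order `2` (with the discrete topology). -/
theorem stmt19 : ∃ (G : Type) (_ : Group G) (τ : TopologicalSpace G),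
    IsProfiniteTopology G τ ∧
    (∀ τ' : TopologicalSpace G, IsProfiniteTopology G τ' → τ' = τ) ∧
    ∃ φ : G →* Multiplicative (ZMod 2), Function.Surjective φ ∧
      ¬@Continuous G (Multiplicative (ZMod 2)) τ ⊥ φ := by
  classical
  refine ⟨ℕ → Equiv.Perm (Fin 3), inferInstance,
    @Pi.topologicalSpace ℕ (fun _ => Equiv.Perm (Fin 3)) (fun _ => ⊥),
    pi_bot_profinite,
    fun τ' h => rigid_aux (by decide) τ' h.1 h.2.1 h.2.2.1, ?_⟩
  obtain ⟨f, hf⟩ := exists_functional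
  set ε : Equiv.Perm (Fin 3) → ZMod 2 :=
    fun s => if Equiv.Perm.sign s = 1 then 0 else 1 with hε
  have hε1 : ε 1 = 0 := by simp [hε]
  have hεmul : ∀ a b : Equiv.Perm (Fin 3), ε (a * b) = ε a + ε b := by decide
  have hεt : ε (Equiv.swap 0 1) = 1 := by decide
  set φ : (ℕ → Equiv.Perm (Fin 3)) →* Multiplicative (ZMod 2) :=
    { toFun := fun x => Multiplicative.ofAdd (f (fun i => ε (x i)))
      map_one' := by
        have h0 : (fun _ : ℕ => ε (1 : Equiv.Perm (Fin 3))) = (0 : ℕ → ZMod 2) :=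
          funext fun _ => hε1
        show Multiplicative.ofAdd (f fun _ : ℕ => ε 1) = 1
        rw [h0, map_zero]; rfl
      map_mul' := by
        intro x y
        show Multiplicative.ofAdd (f fun i => ε (x i * y i)) = _
        have hxy : (fun i : ℕ => ε (x i * y i)) =
            (fun i => ε (x i)) + (fun i => ε (y i)) :=
          funext fun i => hεmul (x i) (y i)
        rw [hxy, map_add]; rfl } with hφ
  have hsingle : ∀ n : ℕ,
      (fun i : ℕ => ε ((Pi.mulSingle n (Equiv.swap (0 : Fin 3) 1) : ℕ → Equiv.Perm (Fin 3)) i)) =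
        (Pi.single n 1 : ℕ → ZMod 2) := by
    intro n
    funext i
    by_cases hi : i = n
    · subst hi
      simp [Pi.mulSingle_eq_same, Pi.single_eq_same, hεt]
    · simp [Pi.mulSingle_eq_of_ne hi, Pi.single_eq_of_ne hi, hε1]
  have hφsingle : ∀ n : ℕ,
      φ (Pi.mulSingle n (Equiv.swap 0 1)) = Multiplicative.ofAdd (1 : ZMod 2) := by
    intro n
    have hr : φ (Pi.mulSingle n (Equiv.swap 0 1)) = Multiplicative.ofAdd
        (f (fun i : ℕ => ε ((Pi.mulSingle n (Equiv.swap (0 : Fin 3) 1) :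
          ℕ → Equiv.Perm (Fin 3)) i))) := rfl
    rw [hr, hsingle n, hf n]
  refine ⟨φ, ?_, ?_⟩
  · -- surjective
    intro m
    have hm : m.toAdd = 0 ∨ m.toAdd = 1 := by
      revert m; decide
    rcases hm with hm | hm
    · refine ⟨1, ?_⟩
      have : φ 1 = 1 := map_one φ
      rw [this]
      have : m = Multiplicative.ofAdd m.toAdd := rfl
      rw [this, hm]; rfl
    · refine ⟨Pi.mulSingle 0 (Equiv.swap 0 1), ?_⟩
      rw [hφsingle 0]
      have : m = Multiplicative.ofAdd m.toAdd := rfl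
      rw [this, hm]
  · -- not continuous
    intro hcont
    letI : TopologicalSpace (Equiv.Perm (Fin 3)) := ⊥
    haveI : DiscreteTopology (Equiv.Perm (Fin 3)) := ⟨rfl⟩
    letI : TopologicalSpace (Multiplicative (ZMod 2)) := ⊥
    haveI : DiscreteTopology (Multiplicative (ZMod 2)) := ⟨rfl⟩
    set x : ℕ → (ℕ → Equiv.Perm (Fin 3)) :=
      fun n => Pi.mulSingle n (Equiv.swap 0 1) with hx
    have hxt : Filter.Tendsto x Filter.atTop (nhds 1) := by
      rw [tendsto_pi_nhds]
      intro i
      apply Filter.Tendsto.congr' _ tendsto_const_nhds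
      filter_upwards [Filter.eventually_gt_atTop i] with n hn
      show (1 : Equiv.Perm (Fin 3)) =
        Pi.mulSingle (M := fun _ : ℕ => Equiv.Perm (Fin 3)) n (Equiv.swap 0 1) i
      exact (Pi.mulSingle_eq_of_ne (M := fun _ : ℕ => Equiv.Perm (Fin 3)) hn.ne
        (Equiv.swap (0 : Fin 3) 1)).symm
    have hφt : Filter.Tendsto (fun n => φ (x n)) Filter.atTop (nhds (φ 1)) :=
      (hcont.tendsto 1).comp hxt
    rw [map_one, nhds_discrete] at hφt
    rw [Filter.tendsto_pure] at hφt
    obtain ⟨n, hn⟩ := hφt.exists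
    rw [hφsingle n] at hn
    exact absurd hn (by decide)
end
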